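/- arXiv:1702.03892 — 4 statements merged into one kernel-verified Lean document; each statement's English description precedes it below -/
import Mathlib

section
/- Let d ≥ 2 be an integer, γ ∈ (1,2], and p ∈ ℝ^d \ {0}. For every α ∈ (0,1) and every unit vector e ∈ ℝ^d with e·p = 0, there exists a unique s > 0 such that αp + s e ∈ S_p; moreover this value s depends only on α and not on the choice of e (so S_p is invariant under rotations fixing p, and is parametrized by w(α,e) = αp + s(α)e for a well-defined function s : (0,1) → (0,∞)). -/
open MeasureTheory Metric Set Filter
open scoped RealInnerProductSpace ENNReal Topology

noncomputable section

/-- `ℝ^d` with the Euclidean norm. -/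
abbrev Rd (d : ℕ) := EuclideanSpace ℝ (Fin d)

/-- `H_0^p(w) = |p-w|^γ + |w|^γ - |p|^γ`. -/
def H0G {d : ℕ} (γ : ℝ) (p w : Rd d) : ℝ := ‖p - w‖ ^ γ + ‖w‖ ^ γ - ‖p‖ ^ γ

/-- The resonant surface `S_p = {w : H_0^p(w) = 0}`. -/
def SresG {d : ℕ} (γ : ℝ) (p : Rd d) : Set (Rd d) := {w | H0G γ p w = 0}

/-- `H_1^p(w) = |p|^γ + |w|^γ - |p+w|^γ`. -/
def H1G {d : ℕ} (γ : ℝ) (p w : Rd d) : ℝ := ‖p‖ ^ γ + ‖w‖ ^ γ - ‖p + w‖ ^ γ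

/-- The resonant surface `S'_p = {w : H_1^p(w) = 0}`. -/
def Sres'G {d : ℕ} (γ : ℝ) (p : Rd d) : Set (Rd d) := {w | H1G γ p w = 0}


lemma sq_rpow_half (x : ℝ) (hx : 0 ≤ x) (γ : ℝ) : (x ^ 2) ^ (γ/2) = x ^ γ := by
  rw [← Real.rpow_natCast x 2, ← Real.rpow_mul hx]
  congr 1; ring

lemma key_norm {d : ℕ} (p e : Rd d) (he : ‖e‖ = 1) (hep : ⟪e, p⟫ = 0)
    (a s : ℝ) : ‖a • p + s • e‖ ^ 2 = a^2 * ‖p‖^2 + s^2 := by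
  rw [norm_add_sq_real, real_inner_smul_left, real_inner_smul_right,
    real_inner_comm e p, hep]
  simp [norm_smul, mul_pow, sq_abs, he]

lemma H0_eval {d : ℕ} (γ : ℝ) (p e : Rd d) (he : ‖e‖ = 1) (hep : ⟪e, p⟫ = 0)
    (a s : ℝ) :
    H0G γ p (a • p + s • e)
      = ((1-a)^2 * ‖p‖^2 + s^2) ^ (γ/2) + (a^2 * ‖p‖^2 + s^2) ^ (γ/2)
        - (‖p‖^2) ^ (γ/2) := by
  have h1 : p - (a • p + s • e) = (1-a) • p + (-s) • e := by module
  have hw : ‖a • p + s • e‖ ^ 2 = a^2 * ‖p‖^2 + s^2 := key_norm p e he hep a s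
  have hw2 : ‖p - (a • p + s • e)‖ ^ 2 = (1-a)^2 * ‖p‖^2 + s^2 := by
    rw [h1, key_norm p e he hep]; ring
  unfold H0G
  rw [← hw, ← hw2, sq_rpow_half _ (norm_nonneg _), sq_rpow_half _ (norm_nonneg _),
    sq_rpow_half _ (norm_nonneg _)]

/-- for every `α ∈ (0,1)` and every unit vector `e ⊥ p` there is a
unique `s > 0` with `αp + s e ∈ S_p`, and this value of `s` does not depend on
the choice of `e` (rotation invariance of `S_p` around `p`). -/
theorem stmt2 (d : ℕ) (hd : 2 ≤ d) (γ : ℝ) (hγ1 : 1 < γ) (hγ2 : γ ≤ 2)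
    (p : Rd d) (hp : p ≠ 0) :
    ∀ α ∈ Set.Ioo (0 : ℝ) 1,
      (∀ e : Rd d, ‖e‖ = 1 → ⟪e, p⟫ = 0 →
        ∃! s : ℝ, 0 < s ∧ α • p + s • e ∈ SresG γ p) ∧
      (∀ e e' : Rd d, ‖e‖ = 1 → ⟪e, p⟫ = 0 → ‖e'‖ = 1 → ⟪e', p⟫ = 0 →
        ∀ s : ℝ, 0 < s →
          (α • p + s • e ∈ SresG γ p ↔ α • p + s • e' ∈ SresG γ p))  := by
  intro α hα
  obtain ⟨hα0, hα1⟩ := hα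
  set P : ℝ := ‖p‖^2 with hPdef
  have hpn : ‖p‖ ≠ 0 := norm_ne_zero_iff.mpr hp
  have hP : 0 < P := by positivity
  have hγ0 : 0 < γ/2 := by linarith
  set F : ℝ → ℝ := fun s => ((1-α)^2 * P + s^2) ^ (γ/2) + (α^2 * P + s^2) ^ (γ/2)
    with hFdef
  set T : ℝ := P ^ (γ/2) with hTdef
  have hmem : ∀ e : Rd d, ‖e‖ = 1 → ⟪e, p⟫ = 0 → ∀ s : ℝ,
      (α • p + s • e ∈ SresG γ p ↔ F s = T) := by
    intro e he hep s
    have := H0_eval γ p e he hep α s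
    constructor
    · intro h
      have h0 : H0G γ p (α • p + s • e) = 0 := h
      rw [this] at h0
      simpa [hFdef, hTdef] using sub_eq_zero.mp h0
    · intro h
      show H0G γ p (α • p + s • e) = 0
      rw [this]
      have : F s - T = 0 := by rw [h]; ring
      simpa [hFdef, hTdef] using this
  have hmono : StrictMonoOn F (Set.Ici (0:ℝ)) := by
    intro x hx y hy hxy
    have hx0 : (0:ℝ) ≤ x := hx
    have hx2 : x^2 < y^2 := by nlinarith
    have c1 : (0:ℝ) ≤ (1-α)^2 * P + x^2 := by positivity
    have c2 : (0:ℝ) ≤ α^2 * P + x^2 := by positivity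
    have l1 : ((1-α)^2 * P + x^2) ^ (γ/2) < ((1-α)^2 * P + y^2) ^ (γ/2) :=
      Real.rpow_lt_rpow c1 (by linarith) hγ0
    have l2 : (α^2 * P + x^2) ^ (γ/2) < (α^2 * P + y^2) ^ (γ/2) :=
      Real.rpow_lt_rpow c2 (by linarith) hγ0
    simpa [hFdef] using add_lt_add l1 l2
  have hT0 : 0 < T := Real.rpow_pos_of_pos hP _
  have hF0 : F 0 < T := by
    have e1 : ((1-α)^2 * P) ^ (γ/2) = (1-α)^γ * T := by
      rw [Real.mul_rpow (by positivity) hP.le, sq_rpow_half _ (by linarith)]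
    have e2 : (α^2 * P) ^ (γ/2) = α^γ * T := by
      rw [Real.mul_rpow (by positivity) hP.le, sq_rpow_half _ hα0.le]
    have l1 : (1-α)^γ < 1 - α := by
      have := Real.rpow_lt_rpow_of_exponent_gt (by linarith : (0:ℝ) < 1-α)
        (by linarith : 1-α < 1) (by linarith : (1:ℝ) < γ)
      simpa using this
    have l2 : α^γ < α := by
      have := Real.rpow_lt_rpow_of_exponent_gt hα0 hα1 (by linarith : (1:ℝ) < γ)
      simpa using this
    have : F 0 = (1-α)^γ * T + α^γ * T := by
      simp only [hFdef]
      rw [← e1, ← e2]; norm_num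
    rw [this]
    nlinarith
  have hFbig : T ≤ F ‖p‖ := by
    have l2 : T ≤ (α^2 * P + ‖p‖^2) ^ (γ/2) := by
      apply Real.rpow_le_rpow hP.le _ hγ0.le
      nlinarith
    have l1 : (0:ℝ) ≤ ((1-α)^2 * P + ‖p‖^2) ^ (γ/2) := Real.rpow_nonneg (by positivity) _
    simp only [hFdef]
    linarith
  have hcont : ContinuousOn F (Set.Icc 0 ‖p‖) := by
    apply Continuous.continuousOn
    apply Continuous.add
    · exact (continuous_const.add (continuous_pow 2)).rpow_const
        (fun x => Or.inr hγ0.le)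
    · exact (continuous_const.add (continuous_pow 2)).rpow_const
        (fun x => Or.inr hγ0.le)
  obtain ⟨s₀, hs₀mem, hs₀⟩ := intermediate_value_Icc (norm_nonneg p) hcont
    ⟨hF0.le, hFbig⟩
  have hs₀pos : 0 < s₀ := by
    rcases lt_or_eq_of_le hs₀mem.1 with h | h
    · exact h
    · exfalso; rw [← h] at hs₀; rw [hs₀] at hF0; exact lt_irrefl _ hF0
  have huniq : ∀ s : ℝ, 0 < s → F s = T → s = s₀ := by
    intro s hs hFs
    exact hmono.injOn (Set.mem_Ici.mpr hs.le) (Set.mem_Ici.mpr hs₀pos.le)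
      (by rw [hFs, hs₀])
  refine ⟨?_, ?_⟩
  · intro e he hep
    refine ⟨s₀, ⟨hs₀pos, (hmem e he hep s₀).mpr hs₀⟩, ?_⟩
    intro s ⟨hs, hsmem⟩
    exact huniq s hs ((hmem e he hep s).mp hsmem)
  · intro e e' he hep he' hep' s hs
    rw [hmem e he hep s, hmem e' he' hep' s]
end
end

section
/- Let d ≥ 2 be an integer, γ ∈ (1,2], p ∈ ℝ^d \ {0}, and let s : (0,1) → (0,∞) be the function such that for each α ∈ (0,1), s(α) is the unique positive number with αp + s(α)e ∈ S_p for any unit vector e orthogonal to p. Then s(α) = s(1−α) for all α ∈ (0,1), and s is strictly increasing on (0,1/2). -/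
open MeasureTheory Metric Set Filter
open scoped RealInnerProductSpace ENNReal Topology

noncomputable section

/-- In dimension `≥ 2` there is a unit vector orthogonal to any given vector. -/
lemma aux_exists_unit_orthogonal (d : ℕ) (hd : 2 ≤ d) (p : Rd d) :
    ∃ e : Rd d, ‖e‖ = 1 ∧ ⟪e, p⟫ = 0 := by
  have hne : (ℝ ∙ p)ᗮ ≠ ⊥ := by
    intro h
    have h2 : (ℝ ∙ p) = ⊤ := (Submodule.orthogonal_eq_bot_iff (K := ℝ ∙ p)).mp h
    have h3 : Module.finrank ℝ (ℝ ∙ p) ≤ 1 := by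
      have := finrank_span_le_card (R := ℝ) ({p} : Set (Rd d))
      simpa using this
    have h4 : Module.finrank ℝ (Rd d) = d := by simp
    rw [h2] at h3
    rw [finrank_top ℝ (Rd d), h4] at h3
    omega
  obtain ⟨v, hv, hv0⟩ := Submodule.exists_mem_ne_zero_of_ne_bot hne
  refine ⟨‖v‖⁻¹ • v, ?_, ?_⟩
  · simp [norm_smul, norm_ne_zero_iff.mpr hv0]
  · have : ⟪v, p⟫ = 0 :=
      (Submodule.mem_orthogonal' (ℝ ∙ p) v).mp hv p (Submodule.mem_span_singleton_self p)
    rw [real_inner_smul_left, this, mul_zero]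

lemma aux_rpow_eq_sq_rpow (x γ : ℝ) (hx : 0 ≤ x) : x ^ γ = (x ^ 2) ^ (γ / 2) := by
  rw [← Real.rpow_natCast x 2, ← Real.rpow_mul hx]
  congr 1
  push_cast; ring

lemma aux_norm_sq_combo {d : ℕ} (p e : Rd d) (he : ‖e‖ = 1) (hpe : ⟪e, p⟫ = 0) (a b : ℝ) :
    ‖a • p + b • e‖ ^ 2 = a ^ 2 * ‖p‖ ^ 2 + b ^ 2 := by
  have hi : ⟪a • p, b • e⟫ = 0 := by
    rw [real_inner_smul_left, real_inner_smul_right, real_inner_comm, hpe]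
    ring
  rw [norm_add_sq_real, hi, norm_smul, norm_smul, mul_pow, mul_pow, he]
  simp [sq_abs]

lemma aux_G_mono_t (A B γ : ℝ) (hA : 0 ≤ A) (hB : 0 ≤ B) (hγ : 0 < γ) :
    StrictMonoOn (fun t : ℝ => (A + t ^ 2) ^ (γ / 2) + (B + t ^ 2) ^ (γ / 2)) (Set.Ici 0) := by
  intro t1 h1 t2 h2 hlt
  have hsq : t1 ^ 2 < t2 ^ 2 := by nlinarith [mem_Ici.mp h1, mem_Ici.mp h2]
  have h1' : (0:ℝ) ≤ t1 ^ 2 := sq_nonneg _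
  have hg2 : 0 < γ / 2 := by linarith
  exact add_lt_add
    (Real.rpow_lt_rpow (by linarith) (by linarith) hg2)
    (Real.rpow_lt_rpow (by linarith) (by linarith) hg2)

lemma aux_key_ineq (c t γ α : ℝ) (hc : 0 < c) (ht : 0 < t) (hγ1 : 1 < γ) (hγ2 : γ ≤ 2)
    (hα : 0 < α) (hα2 : α < 1 / 2) :
    α * ((α ^ 2 * c + t ^ 2) ^ (γ / 2 - 1)) <
      (1 - α) * (((1 - α) ^ 2 * c + t ^ 2) ^ (γ / 2 - 1)) := by
  set u : ℝ := (1 - α) ^ 2 * c + t ^ 2 with hu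
  set v : ℝ := α ^ 2 * c + t ^ 2 with hv
  have hvpos : 0 < v := by positivity
  have hupos : 0 < u := by positivity
  set κ : ℝ := 1 - γ / 2 with hκ
  have hκ0 : 0 ≤ κ := by simp only [hκ]; linarith
  have hκ1 : 2 * κ < 1 := by simp only [hκ]; linarith
  have hre : ∀ x : ℝ, 0 < x → x ^ (γ / 2 - 1) = (x ^ κ)⁻¹ := by
    intro x hx
    rw [show γ / 2 - 1 = -κ by simp only [hκ]; ring, Real.rpow_neg hx.le]
  rw [hre v hvpos, hre u hupos]
  have hvκ : 0 < v ^ κ := Real.rpow_pos_of_pos hvpos κ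
  have huκ : 0 < u ^ κ := Real.rpow_pos_of_pos hupos κ
  rw [← div_eq_mul_inv, ← div_eq_mul_inv, div_lt_div_iff₀ hvκ huκ]
  set r : ℝ := (1 - α) / α with hr
  have hr1 : 1 < r := by rw [hr, lt_div_iff₀ hα]; linarith
  have hr0 : 0 < r := by linarith
  have huv : u ≤ r ^ 2 * v := by
    have : r ^ 2 * v = (1 - α) ^ 2 * c + r ^ 2 * t ^ 2 := by
      rw [hr, hv]
      field_simp
    rw [this]
    have hr2 : (1:ℝ) ≤ r ^ 2 := by nlinarith [hr1]
    have : (1:ℝ) * t ^ 2 ≤ r ^ 2 * t ^ 2 := mul_le_mul_of_nonneg_right hr2 (sq_nonneg t)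
    simp only [hu]; nlinarith
  have step1 : u ^ κ ≤ (r ^ 2 * v) ^ κ := Real.rpow_le_rpow hupos.le huv hκ0
  have step2 : (r ^ 2 * v) ^ κ = r ^ (2 * κ) * v ^ κ := by
    rw [Real.mul_rpow (by positivity) hvpos.le, ← Real.rpow_natCast r 2,
      ← Real.rpow_mul hr0.le]
    norm_num
  have step3 : r ^ (2 * κ) < r := by
    calc r ^ (2 * κ) < r ^ (1:ℝ) := Real.rpow_lt_rpow_of_exponent_lt hr1 (by linarith)
    _ = r := Real.rpow_one r
  calc α * u ^ κ ≤ α * (r ^ (2 * κ) * v ^ κ) := by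
        rw [← step2]; exact mul_le_mul_of_nonneg_left step1 hα.le
    _ < α * (r * v ^ κ) := by
        apply mul_lt_mul_of_pos_left _ hα
        exact mul_lt_mul_of_pos_right step3 hvκ
    _ = (1 - α) * v ^ κ := by
        rw [hr]; field_simp

lemma aux_G_anti (c t γ : ℝ) (hc : 0 < c) (ht : 0 < t) (hγ1 : 1 < γ) (hγ2 : γ ≤ 2) :
    StrictAntiOn (fun α : ℝ => ((1 - α) ^ 2 * c + t ^ 2) ^ (γ / 2) + (α ^ 2 * c + t ^ 2) ^ (γ / 2))
      (Set.Icc 0 (1 / 2)) := by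
  set g : ℝ → ℝ :=
    fun α => ((1 - α) ^ 2 * c + t ^ 2) ^ (γ / 2) + (α ^ 2 * c + t ^ 2) ^ (γ / 2) with hg
  set D : ℝ → ℝ := fun α =>
    ((2:ℕ) * (1 - α) ^ 1 * (-1) * c) * (γ / 2) * (((1 - α) ^ 2 * c + t ^ 2) ^ (γ / 2 - 1)) +
    ((2:ℕ) * α ^ 1 * 1 * c) * (γ / 2) * ((α ^ 2 * c + t ^ 2) ^ (γ / 2 - 1)) with hD
  have hupos : ∀ α : ℝ, 0 < (1 - α) ^ 2 * c + t ^ 2 := fun α => by positivity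
  have hvpos : ∀ α : ℝ, 0 < α ^ 2 * c + t ^ 2 := fun α => by positivity
  have hder : ∀ α : ℝ, HasDerivAt g (D α) α := by
    intro α
    have hb : HasDerivAt (fun α : ℝ => 1 - α) (-1) α := (hasDerivAt_id α).const_sub 1
    have h1 : HasDerivAt (fun α : ℝ => (1 - α) ^ 2 * c + t ^ 2)
        ((2:ℕ) * (1 - α) ^ 1 * (-1) * c) α := ((hb.pow 2).mul_const c).add_const (t ^ 2)
    have h2 : HasDerivAt (fun α : ℝ => α ^ 2 * c + t ^ 2)
        ((2:ℕ) * α ^ 1 * 1 * c) α := (((hasDerivAt_id α).pow 2).mul_const c).add_const (t ^ 2)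
    exact (h1.rpow_const (Or.inl (hupos α).ne')).add (h2.rpow_const (Or.inl (hvpos α).ne'))
  apply strictAntiOn_of_deriv_neg (convex_Icc _ _)
  · exact (continuous_iff_continuousAt.mpr
      fun α => (hder α).differentiableAt.continuousAt).continuousOn
  · intro α hα
    rw [interior_Icc, mem_Ioo] at hα
    rw [(hder α).deriv]
    have hk := aux_key_ineq c t γ α hc ht hγ1 hγ2 hα.1 hα.2
    have hgc : 0 < γ * c := by positivity
    have h3 : γ * c * (α * ((α ^ 2 * c + t ^ 2) ^ (γ / 2 - 1))) <
        γ * c * ((1 - α) * (((1 - α) ^ 2 * c + t ^ 2) ^ (γ / 2 - 1))) :=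
      mul_lt_mul_of_pos_left hk hgc
    have heq : D α = γ * c * (α * ((α ^ 2 * c + t ^ 2) ^ (γ / 2 - 1))) -
        γ * c * ((1 - α) * (((1 - α) ^ 2 * c + t ^ 2) ^ (γ / 2 - 1))) := by
      simp only [hD]
      push_cast
      ring
    rw [heq]
    linarith

/-- if `s : (0,1) → (0,∞)` is the parametrizing function of `S_p`
(`αp + s(α)e ∈ S_p` for every unit `e ⊥ p`), then `s(α) = s(1-α)` and `s` is
strictly increasing on `(0, 1/2)`. -/
theorem stmt3 (d : ℕ) (hd : 2 ≤ d) (γ : ℝ) (hγ1 : 1 < γ) (hγ2 : γ ≤ 2)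
    (p : Rd d) (hp : p ≠ 0) (s : ℝ → ℝ)
    (hs : ∀ α ∈ Set.Ioo (0 : ℝ) 1, 0 < s α ∧
      ∀ e : Rd d, ‖e‖ = 1 → ⟪e, p⟫ = 0 → α • p + s α • e ∈ SresG γ p) :
    (∀ α ∈ Set.Ioo (0 : ℝ) 1, s α = s (1 - α)) ∧
      StrictMonoOn s (Set.Ioo (0 : ℝ) (1 / 2)) := by
  obtain ⟨e, he, hpe⟩ := aux_exists_unit_orthogonal d hd p
  set c : ℝ := ‖p‖ ^ 2 with hcdef
  have hc : 0 < c := by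
    have : 0 < ‖p‖ := norm_pos_iff.mpr hp
    positivity
  have hγ0 : 0 < γ := by linarith
  -- the key equation
  have keyEq : ∀ α ∈ Set.Ioo (0:ℝ) 1,
      ((1 - α) ^ 2 * c + (s α) ^ 2) ^ (γ / 2) + (α ^ 2 * c + (s α) ^ 2) ^ (γ / 2)
        = c ^ (γ / 2) := by
    intro α hα
    have hmem := (hs α hα).2 e he hpe
    simp only [SresG, H0G, Set.mem_setOf_eq] at hmem
    set w : Rd d := α • p + s α • e with hw
    have hw2 : ‖w‖ ^ 2 = α ^ 2 * c + (s α) ^ 2 := aux_norm_sq_combo p e he hpe α (s α)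
    have hpw : p - w = (1 - α) • p + (-(s α)) • e := by
      simp only [hw]; module
    have hpw2 : ‖p - w‖ ^ 2 = (1 - α) ^ 2 * c + (s α) ^ 2 := by
      rw [hpw, aux_norm_sq_combo p e he hpe (1 - α) (-(s α))]
      ring
    have e1 : ‖p - w‖ ^ γ = ((1 - α) ^ 2 * c + (s α) ^ 2) ^ (γ / 2) := by
      rw [aux_rpow_eq_sq_rpow _ γ (norm_nonneg _), hpw2]
    have e2 : ‖w‖ ^ γ = (α ^ 2 * c + (s α) ^ 2) ^ (γ / 2) := by
      rw [aux_rpow_eq_sq_rpow _ γ (norm_nonneg _), hw2]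
    have e3 : ‖p‖ ^ γ = c ^ (γ / 2) := by
      rw [aux_rpow_eq_sq_rpow _ γ (norm_nonneg _)]
    rw [e1, e2, e3] at hmem
    linarith
  constructor
  · -- symmetry
    intro α hα
    obtain ⟨hα0, hα1⟩ := hα
    have hα' : (1 - α) ∈ Set.Ioo (0:ℝ) 1 := ⟨by linarith, by linarith⟩
    have hpos := (hs α ⟨hα0, hα1⟩).1
    have hpos' := (hs (1 - α) hα').1
    have h1 := keyEq α ⟨hα0, hα1⟩
    have h2 := keyEq (1 - α) hα'
    rw [show (1 - (1 - α)) = α by ring] at h2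
    have h2' : ((1 - α) ^ 2 * c + (s (1 - α)) ^ 2) ^ (γ / 2)
        + (α ^ 2 * c + (s (1 - α)) ^ 2) ^ (γ / 2) = c ^ (γ / 2) := by linarith
    exact (aux_G_mono_t ((1 - α) ^ 2 * c) (α ^ 2 * c) γ (by positivity) (by positivity)
      hγ0).injOn (mem_Ici.mpr hpos.le) (mem_Ici.mpr hpos'.le) (by
        show _ = _
        rw [h1, h2'])
  · -- strict monotonicity
    intro a ha b hb hab
    obtain ⟨ha0, ha2⟩ := ha
    obtain ⟨hb0, hb2⟩ := hb
    have ha1 : a ∈ Set.Ioo (0:ℝ) 1 := ⟨ha0, by linarith⟩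
    have hb1 : b ∈ Set.Ioo (0:ℝ) 1 := ⟨hb0, by linarith⟩
    have hsa := (hs a ha1).1
    have hsb := (hs b hb1).1
    have hanti := aux_G_anti c (s a) γ hc hsa hγ1 hγ2
      (Set.mem_Icc.mpr ⟨ha0.le, ha2.le⟩) (Set.mem_Icc.mpr ⟨hb0.le, hb2.le⟩) hab
    have hga := keyEq a ha1
    have hgb := keyEq b hb1
    -- hanti : F_b (s a) < F_a (s a) = c^(γ/2) = F_b (s b)
    by_contra hcon
    push_neg at hcon
    have hmono := (aux_G_mono_t ((1 - b) ^ 2 * c) (b ^ 2 * c) γ (by positivity) (by positivity)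
      hγ0).monotoneOn (mem_Ici.mpr hsb.le) (mem_Ici.mpr hsa.le) hcon
    linarith
end
end

section
/- Let d ∈ {2,3}. There exists a universal constant C_0 > 0 such that for all nonzero k, k_1, k_2 ∈ ℝ^d satisfying the resonant conditions k = k_1 + k_2 and |k|^{3/2} = |k_1|^{3/2} + |k_2|^{3/2}, the interaction kernel satisfies |V_{k,k_1,k_2}| ≤ C_0 √(E_k E_{k_1} E_{k_2}) = C_0 (|k||k_1||k_2|)^{3/4}. -/
open MeasureTheory Metric Set Filter
open scoped RealInnerProductSpace ENNReal Topology

noncomputable section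

/-- The capillary-wave dispersion relation `E_k = |k|^{3/2}`. -/
def Ek {d : ℕ} (k : Rd d) : ℝ := ‖k‖ ^ (3 / 2 : ℝ)

/-- `H_0^k(w) = |k-w|^{3/2} + |w|^{3/2} - |k|^{3/2}`. -/
def H0 {d : ℕ} (k w : Rd d) : ℝ := ‖k - w‖ ^ (3 / 2 : ℝ) + ‖w‖ ^ (3 / 2 : ℝ) - ‖k‖ ^ (3 / 2 : ℝ)

/-- `H_1^k(w) = |k|^{3/2} + |w|^{3/2} - |k+w|^{3/2}`. -/
def H1 {d : ℕ} (k w : Rd d) : ℝ := ‖k‖ ^ (3 / 2 : ℝ) + ‖w‖ ^ (3 / 2 : ℝ) - ‖k + w‖ ^ (3 / 2 : ℝ)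

/-- The resonant surface `S_k = {w : H_0^k(w) = 0}`. -/
def Sres {d : ℕ} (k : Rd d) : Set (Rd d) := {w | H0 k w = 0}

/-- The resonant surface `S'_k = {w : H_1^k(w) = 0}`. -/
def Sres' {d : ℕ} (k : Rd d) : Set (Rd d) := {w | H1 k w = 0}

/-- `L_{p,q} = p·q + |p||q|`. -/
def Lpq {d : ℕ} (p q : Rd d) : ℝ := ⟪p, q⟫ + ‖p‖ * ‖q‖

/-- The interaction kernel `V_{k,k_1,k_2}` for capillary waves. -/
def Vker {d : ℕ} (k k1 k2 : Rd d) : ℝ :=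
  (8 * Real.pi * Real.sqrt 2)⁻¹ * Real.sqrt (Ek k * Ek k1 * Ek k2) *
    (Lpq k1 k2 / (‖k‖ * Real.sqrt (‖k1‖ * ‖k2‖))
      - Lpq k (-k1) / (‖k2‖ * Real.sqrt (‖k‖ * ‖k1‖))
      - Lpq k (-k2) / (‖k1‖ * Real.sqrt (‖k‖ * ‖k2‖)))

/-- `R_{k,k_1,k_2}[f] = 4π|V_{k,k_1,k_2}|²(f₁f₂ - ff₁ - ff₂)`. -/
def Rcoll {d : ℕ} (f : Rd d → ℝ) (k k1 k2 : Rd d) : ℝ :=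
  4 * Real.pi * Vker k k1 k2 ^ 2 * (f k1 * f k2 - f k * f k1 - f k * f k2)

/-- The collision operator `Q[f]`, written via surface integrals over the
resonant manifolds (w.r.t. the `(d-1)`-dimensional Hausdorff measure). -/
def Qcoll {d : ℕ} (f : Rd d → ℝ) (k : Rd d) : ℝ :=
  (∫ k2 in Sres k, Rcoll f k (k - k2) k2 * ‖gradient (H0 k) k2‖⁻¹ ∂(μH[(d : ℝ) - 1]))
    - 2 * ∫ k2 in Sres' k, Rcoll f (k + k2) k k2 * ‖gradient (H1 k) k2‖⁻¹ ∂(μH[(d : ℝ) - 1])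

/-- A function on `ℝ^d` is radial if it depends only on the norm. -/
def IsRadial {d : ℕ} (g : Rd d → ℝ) : Prop := ∀ k k' : Rd d, ‖k‖ = ‖k'‖ → g k = g k'

/-- The weighted norm `‖f‖_{L^1_N} = ∫ |f(k)| E_k^N dk`. -/
def L1norm {d : ℕ} (N : ℝ) (f : Rd d → ℝ) : ℝ := ∫ k : Rd d, |f k| * Ek k ^ N

/-- The moment `M_n[g] = ∫ g(k) E_k^n dk`. -/
def moment {d : ℕ} (n : ℝ) (g : Rd d → ℝ) : ℝ := ∫ k : Rd d, g k * Ek k ^ n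


lemma stmt8_Lpq_nonneg {d : ℕ} (p q : Rd d) : 0 ≤ Lpq p q := by
  have h := abs_real_inner_le_norm p q
  have := abs_le.mp h
  unfold Lpq; linarith [this.1]

lemma stmt8_key {d : ℕ} (p q : Rd d) :
    Lpq p q / (‖p + q‖ * Real.sqrt (‖p‖ * ‖q‖)) ≤ 1 := by
  have hL0 := stmt8_Lpq_nonneg p q
  have hL1 : Lpq p q ≤ 2 * ‖p‖ * ‖q‖ := by
    have := real_inner_le_norm p q; unfold Lpq; linarith
  have hL2 : 2 * Lpq p q ≤ ‖p + q‖ ^ 2 := by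
    have h := norm_add_sq_real p q
    have := sq_nonneg (‖p‖ - ‖q‖)
    unfold Lpq; nlinarith
  set D : ℝ := ‖p + q‖ * Real.sqrt (‖p‖ * ‖q‖) with hD
  have hD0 : 0 ≤ D := by positivity
  rcases eq_or_lt_of_le hD0 with h0 | h0
  · rw [← h0]
    have : Lpq p q = 0 := by
      rcases mul_eq_zero.mp h0.symm with h | h
      · have : ‖p + q‖ ^ 2 = 0 := by rw [h]; ring
        nlinarith
      · have h2 : ‖p‖ * ‖q‖ ≤ 0 := Real.sqrt_eq_zero' .. |>.mp h
        nlinarith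
    simp [this]
  · rw [div_le_one h0]
    have hsq : D ^ 2 = ‖p + q‖ ^ 2 * (‖p‖ * ‖q‖) := by
      rw [hD, mul_pow, Real.sq_sqrt (by positivity)]
    nlinarith [sq_nonneg (Lpq p q - D)]

/-- for `d ∈ {2,3}` there is a universal constant `C₀ > 0` such
that on the resonant manifold (`k = k₁ + k₂`, `E_k = E_{k₁} + E_{k₂}`) the
interaction kernel satisfies `|V_{k,k₁,k₂}| ≤ C₀ √(E_k E_{k₁} E_{k₂})`. -/
theorem stmt8 (d : ℕ) (hd : d = 2 ∨ d = 3) :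
    ∃ C0 : ℝ, 0 < C0 ∧
      ∀ k k1 k2 : Rd d, k ≠ 0 → k1 ≠ 0 → k2 ≠ 0 →
        k = k1 + k2 → Ek k = Ek k1 + Ek k2 →
        |Vker k k1 k2| ≤ C0 * Real.sqrt (Ek k * Ek k1 * Ek k2) := by
  refine ⟨1, one_pos, ?_⟩
  intro k k1 k2 hk hk1 hk2 hsum _hE
  have hk2' : k + -k1 = k2 := by rw [hsum]; abel
  have hk1' : k + -k2 = k1 := by rw [hsum]; abel
  set s := Real.sqrt (Ek k * Ek k1 * Ek k2) with hs
  have hs0 : 0 ≤ s := Real.sqrt_nonneg _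
  set t1 : ℝ := Lpq k1 k2 / (‖k‖ * Real.sqrt (‖k1‖ * ‖k2‖)) with ht1
  set t2 : ℝ := Lpq k (-k1) / (‖k2‖ * Real.sqrt (‖k‖ * ‖k1‖)) with ht2
  set t3 : ℝ := Lpq k (-k2) / (‖k1‖ * Real.sqrt (‖k‖ * ‖k2‖)) with ht3
  have h1 : t1 ≤ 1 := by
    have := stmt8_key k1 k2
    rwa [← hsum] at this
  have h2 : t2 ≤ 1 := by
    have := stmt8_key k (-k1)
    rwa [hk2', norm_neg] at this
  have h3 : t3 ≤ 1 := by
    have := stmt8_key k (-k2)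
    rwa [hk1', norm_neg] at this
  have h1' : 0 ≤ t1 := div_nonneg (stmt8_Lpq_nonneg _ _) (by positivity)
  have h2' : 0 ≤ t2 := div_nonneg (stmt8_Lpq_nonneg _ _) (by positivity)
  have h3' : 0 ≤ t3 := div_nonneg (stmt8_Lpq_nonneg _ _) (by positivity)
  have hB : |t1 - t2 - t3| ≤ 3 := abs_le.mpr ⟨by linarith, by linarith⟩
  have hpi := Real.pi_gt_three
  have hsqrt2 : (1 : ℝ) ≤ Real.sqrt 2 := by
    rw [show (1 : ℝ) = Real.sqrt 1 by simp]
    exact Real.sqrt_le_sqrt (by norm_num)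
  have hden : (24 : ℝ) ≤ 8 * Real.pi * Real.sqrt 2 := by nlinarith
  have hcpos : (0 : ℝ) < 8 * Real.pi * Real.sqrt 2 := by linarith
  have hc : (8 * Real.pi * Real.sqrt 2)⁻¹ ≤ 1 / 24 := by
    rw [inv_le_comm₀ (by linarith) (by norm_num)]
    simpa using hden
  have hc0 : 0 ≤ (8 * Real.pi * Real.sqrt 2)⁻¹ := by positivity
  have hV : |Vker k k1 k2| =
      (8 * Real.pi * Real.sqrt 2)⁻¹ * s * |t1 - t2 - t3| := by
    unfold Vker
    rw [abs_mul, abs_mul, abs_of_nonneg hc0, abs_of_nonneg hs0]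
  rw [hV, one_mul]
  have habs0 : 0 ≤ |t1 - t2 - t3| := abs_nonneg _
  have hmul := mul_le_mul hc hB habs0 (by norm_num : (0:ℝ) ≤ 1 / 24)
  nlinarith [mul_le_mul_of_nonneg_right hmul hs0]
end
end

section
/- Let (E, ‖·‖) be a real Banach space, T > 0, S ⊆ E a bounded, convex, closed subset, and Q : S → E an operator satisfying: (A) there exist a norm ‖·‖_* on E, a constant C_E with ‖u‖_* ≤ C_E ‖u‖ for all u ∈ E, a functional |·|_* : E → ℝ that is subadditive (|u+v|_* ≤ |u|_* + |v|_*) and positively homogeneous (|αu|_* = α|u|_* for α ≥ 0), with |u|_* = ‖u‖_* for all u ∈ S, |u|_* ≤ ‖u‖_* ≤ C_E‖u‖ for all u ∈ E, and a constant C_* with |Q[u]|_* ≤ C_*(1 + |u|_*) for all u ∈ S, and a constant R_* ≥ 1 such that S ⊆ {u ∈ E : ‖u‖_* ≤ (2R_*+1)e^{(C_*+1)T}}; (B) the sub-tangent condition liminf_{h→0^+} h^{−1} dist(u + hQ[u], S) = 0 for all u ∈ S with ‖u‖_* ≤ (2R_*+1)e^{(C_*+1)T}; (C) Hölder continuity: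 there are C > 0 and β ∈ (0,1) with ‖Q[u] − Q[v]‖ ≤ C‖u − v‖^β for all u, v ∈ S; (D) the one-sided Lipschitz condition [Q[u] − Q[v], u − v] ≤ C‖u − v‖ for all u, v ∈ S, where [φ, ψ] = lim_{h→0^−} h^{−1}(‖ψ + hφ‖ − ‖ψ‖). Then for every u_0 ∈ S with ‖u_0‖_* ≤ R_*, the initial value problem du/dt = Q[u(t)] on [0,T], u(0) = u_0, has a unique solution u which is continuously differentiable on (0,T) with values in E, continuous on [0,T], and takes values in S. -/
open MeasureTheory Metric Set Filter
open scoped Topology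

noncomputable section

set_option linter.unusedSectionVars false
set_option linter.unusedVariables false
set_option maxHeartbeats 1000000

/-- The one-sided bracket `[φ, ψ] = lim_{h→0⁻} h⁻¹(‖ψ + hφ‖ - ‖ψ‖)`. -/
def bracket {E : Type*} [NormedAddCommGroup E] [NormedSpace ℝ E] (φ ψ : E) : ℝ :=
  limUnder (𝓝[<] (0 : ℝ)) fun h : ℝ => h⁻¹ * (‖ψ + h • φ‖ - ‖ψ‖)

section Bracket
variable {E : Type*} [NormedAddCommGroup E] [NormedSpace ℝ E]

lemma bracket_slope_mono (φ ψ : E) : MonotoneOn (fun h : ℝ => h⁻¹ * (‖ψ + h • φ‖ - ‖ψ‖)) (Iio 0) := by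
  intro h1 h1m h2 h2m h12
  simp only [mem_Iio] at h1m h2m
  set θ : ℝ := h2 / h1 with hθ
  have hθ0 : 0 ≤ θ := div_nonneg_iff.2 (Or.inr ⟨h2m.le, h1m.le⟩)
  have hθ1 : θ ≤ 1 := by
    rw [hθ, div_le_one_of_neg h1m]; exact h12
  have hid : ψ + h2 • φ = (1 - θ) • ψ + θ • (ψ + h1 • φ) := by
    have : θ * h1 = h2 := div_mul_cancel₀ _ h1m.ne
    rw [smul_add, smul_smul, this]
    module
  have key : ‖ψ + h2 • φ‖ - ‖ψ‖ ≤ θ * (‖ψ + h1 • φ‖ - ‖ψ‖) := by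
    have := norm_add_le ((1 - θ) • ψ) (θ • (ψ + h1 • φ))
    rw [← hid, norm_smul, norm_smul, Real.norm_eq_abs, Real.norm_eq_abs,
      abs_of_nonneg (by linarith), abs_of_nonneg hθ0] at this
    nlinarith [this]
  have hc : h2⁻¹ * θ = h1⁻¹ := by
    rw [hθ]
    rw [div_eq_mul_inv, ← mul_assoc, inv_mul_cancel₀ h2m.ne, one_mul]
  have e : h2⁻¹ * (θ * (‖ψ + h1 • φ‖ - ‖ψ‖)) = h1⁻¹ * (‖ψ + h1 • φ‖ - ‖ψ‖) := by
    rw [← mul_assoc, hc]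
  show h1⁻¹ * (‖ψ + h1 • φ‖ - ‖ψ‖) ≤ h2⁻¹ * (‖ψ + h2 • φ‖ - ‖ψ‖)
  calc h1⁻¹ * (‖ψ + h1 • φ‖ - ‖ψ‖) = h2⁻¹ * (θ * (‖ψ + h1 • φ‖ - ‖ψ‖)) := e.symm
    _ ≤ h2⁻¹ * (‖ψ + h2 • φ‖ - ‖ψ‖) := mul_le_mul_of_nonpos_left key (inv_nonpos.2 h2m.le)

lemma bracket_slope_le_norm (φ ψ : E) {h : ℝ} (hh : h < 0) :
    h⁻¹ * (‖ψ + h • φ‖ - ‖ψ‖) ≤ ‖φ‖ := by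
  have h1 : ‖ψ‖ ≤ ‖ψ + h • φ‖ + ‖h • φ‖ := by
    calc ‖ψ‖ = ‖ψ + h • φ - h • φ‖ := by rw [add_sub_cancel_right]
    _ ≤ _ := norm_sub_le _ _
  have h2 : ‖h • φ‖ = -h * ‖φ‖ := by rw [norm_smul, Real.norm_eq_abs, abs_of_neg hh]
  have h3 : h * ‖φ‖ ≤ ‖ψ + h • φ‖ - ‖ψ‖ := by linarith
  calc h⁻¹ * (‖ψ + h • φ‖ - ‖ψ‖) ≤ h⁻¹ * (h * ‖φ‖) :=
        mul_le_mul_of_nonpos_left h3 (inv_nonpos.2 hh.le)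
  _ = ‖φ‖ := by rw [← mul_assoc, inv_mul_cancel₀ hh.ne, one_mul]

lemma bracket_bddAbove (φ ψ : E) :
    BddAbove ((fun h : ℝ => h⁻¹ * (‖ψ + h • φ‖ - ‖ψ‖)) '' Iio 0) := by
  refine ⟨‖φ‖, ?_⟩
  rintro x ⟨h, hh, rfl⟩
  exact bracket_slope_le_norm φ ψ hh

lemma bracket_tendsto (φ ψ : E) :
    Tendsto (fun h : ℝ => h⁻¹ * (‖ψ + h • φ‖ - ‖ψ‖)) (𝓝[<] (0:ℝ)) (𝓝 (bracket φ ψ)) := by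
  have ht := (bracket_slope_mono φ ψ).tendsto_nhdsLT (bracket_bddAbove φ ψ)
  rw [bracket, ht.limUnder_eq]
  exact ht

lemma slope_le_bracket (φ ψ : E) {h : ℝ} (hh : h < 0) :
    h⁻¹ * (‖ψ + h • φ‖ - ‖ψ‖) ≤ bracket φ ψ := by
  have ht := (bracket_slope_mono φ ψ).tendsto_nhdsLT (bracket_bddAbove φ ψ)
  have he : bracket φ ψ = sSup ((fun h : ℝ => h⁻¹ * (‖ψ + h • φ‖ - ‖ψ‖)) '' Iio 0) := by
    rw [bracket, ht.limUnder_eq]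
  rw [he]
  exact le_csSup (bracket_bddAbove φ ψ) ⟨h, hh, rfl⟩

lemma norm_sub_le_bracket (φ ψ : E) {k : ℝ} (hk : 0 < k) :
    ‖ψ‖ - ‖ψ - k • φ‖ ≤ k * bracket φ ψ := by
  have := slope_le_bracket φ ψ (neg_neg_iff_pos.2 hk : -k < 0)
  rw [neg_smul, ← sub_eq_add_neg] at this
  have h2 : (-k)⁻¹ * (‖ψ - k • φ‖ - ‖ψ‖) = k⁻¹ * (‖ψ‖ - ‖ψ - k • φ‖) := by
    rw [inv_neg]
    ring
  rw [h2] at this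
  calc ‖ψ‖ - ‖ψ - k • φ‖ = k * (k⁻¹ * (‖ψ‖ - ‖ψ - k • φ‖)) := by
        rw [← mul_assoc, mul_inv_cancel₀ hk.ne', one_mul]
  _ ≤ k * bracket φ ψ := by
        exact mul_le_mul_of_nonneg_left this hk.le

end Bracket

lemma map_const_sub_nhdsWithin_Iio (c t : ℝ) :
    Filter.map (fun s : ℝ => c - s) (𝓝[<] t) = 𝓝[>] (c - t) := by
  have hinj : Function.Injective (fun s : ℝ => c - s) := fun x y h => by
    simpa using sub_right_injective (G := ℝ) h
  rw [nhdsWithin, nhdsWithin, Filter.map_inf hinj, Filter.map_principal]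
  congr 1
  · exact (Homeomorph.subLeft c).map_nhds_eq t
  · rw [image_const_sub_Iio]

/-- Grönwall inequality with left-slope (upper left Dini) bounds. -/
lemma gronwall_left {g : ℝ → ℝ} {a b K η : ℝ} (hab : a ≤ b) (hK : 0 < K) (hη : 0 ≤ η)
    (hg : ContinuousOn g (Icc a b))
    (hs : ∀ t ∈ Ioc a b, ∀ r : ℝ, K * g t + η < r →
      ∃ᶠ s in 𝓝[<] t, (t - s)⁻¹ * (g t - g s) < r) :
    g b ≤ Real.exp (K * (b - a)) * (g a + η * (b - a)) := by
  set f : ℝ → ℝ := fun s => -g (a + b - s) with hf_def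
  have hmaps : MapsTo (fun s : ℝ => a + b - s) (Icc a b) (Icc a b) := by
    intro s hs'
    simp only [mem_Icc] at *
    constructor <;> linarith [hs'.1, hs'.2]
  have hf : ContinuousOn f (Icc a b) := by
    apply ContinuousOn.neg
    exact hg.comp ((continuous_const.sub continuous_id).continuousOn) hmaps
  have key := le_gronwallBound_of_liminf_deriv_right_le (f := f)
    (f' := fun x => (-K) * f x + η) (δ := -g b) (K := -K) (ε := η) (a := a) (b := b) hf
    ?hf' ?ha ?bound b (right_mem_Icc.2 hab)
  case ha => simp [hf_def]
  case bound => intro x _; exact le_refl _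
  case hf' =>
    intro x hx r hr
    set t : ℝ := a + b - x with ht_def
    have htmem : t ∈ Ioc a b := by
      simp only [mem_Ico] at hx
      constructor <;> simp only [ht_def] <;> linarith [hx.1, hx.2]
    have hfx : f x = -g t := by simp [hf_def, ht_def]
    have hr0 : -K * f x + η < r := hr
    have hr' : K * g t + η < r := by
      rw [hfx] at hr0; linarith [hr0]
    have hfreq := hs t htmem r hr'
    have hmap : 𝓝[>] x = Filter.map (fun s : ℝ => a + b - s) (𝓝[<] t) := by
      rw [map_const_sub_nhdsWithin_Iio, show a + b - t = x from by rw [ht_def]; ring]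
    rw [hmap, Filter.frequently_map]
    apply hfreq.mono
    intro s hs'
    have h1 : (a + b - s) - x = t - s := by simp [ht_def]; ring
    have h2 : f (a + b - s) - f x = g t - g s := by
      simp only [hf_def, ht_def]; ring_nf
    rw [h1, h2]
    exact hs'
  -- now unwind the conclusion
  have hfb : f b = -g a := by simp [hf_def]
  rw [hfb, gronwallBound_of_K_ne_0 (by linarith : -K ≠ 0)] at key
  set c : ℝ := b - a with hc
  have hc0 : 0 ≤ c := by linarith
  have hPinv : Real.exp (-K * c) = (Real.exp (K * c))⁻¹ := by
    rw [← Real.exp_neg]; ring_nf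
  set P : ℝ := Real.exp (K * c) with hP
  have hPpos : 0 < P := Real.exp_pos _
  have hP1 : 1 - K * c ≤ P⁻¹ := by
    have h := Real.add_one_le_exp (-(K * c))
    rw [← hPinv, neg_mul]
    linarith [h]
  have key2 : -g a ≤ -g b * Real.exp (-K * c) + η / -K * (Real.exp (-K * c) - 1) := key
  rw [hPinv] at key2
  -- key : -g a ≤ -g b * P⁻¹ + η / -K * (P⁻¹ - 1)
  have hPP : P * P⁻¹ = 1 := mul_inv_cancel₀ hPpos.ne'
  have step1 : g b * P⁻¹ ≤ g a + (η / K) * (1 - P⁻¹) := by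
    have : η / -K * (P⁻¹ - 1) = η / K * (1 - P⁻¹) := by
      rw [div_neg]; ring
    rw [this] at key2
    linarith [key2]
  have step2 : (η / K) * (1 - P⁻¹) ≤ η * c := by
    have h1 : 1 - P⁻¹ ≤ K * c := by linarith
    have h2 : 0 ≤ η / K := div_nonneg hη hK.le
    calc (η / K) * (1 - P⁻¹) ≤ (η / K) * (K * c) := mul_le_mul_of_nonneg_left h1 h2
    _ = η * c := by field_simp
  have step3 : g b * P⁻¹ ≤ g a + η * c := by linarith
  calc g b = P * (g b * P⁻¹) := by rw [← mul_assoc, mul_comm P (g b), mul_assoc, hPP, mul_one]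
  _ ≤ P * (g a + η * c) := mul_le_mul_of_nonneg_left step3 hPpos.le

lemma rpow_small {c β θ : ℝ} (hc : 0 < c) (hβ : 0 < β) (hθ : 0 < θ) :
    ∃ δ > 0, ∀ x : ℝ, 0 ≤ x → x ≤ δ → c * x ^ β ≤ θ := by
  refine ⟨(θ / c) ^ β⁻¹, by positivity, ?_⟩
  intro x hx0 hxδ
  have h1 : x ^ β ≤ ((θ / c) ^ β⁻¹) ^ β := Real.rpow_le_rpow hx0 hxδ hβ.le
  have h2 : ((θ / c) ^ β⁻¹) ^ β = θ / c := by
    rw [← Real.rpow_mul (by positivity), inv_mul_cancel₀ hβ.ne', Real.rpow_one]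
  rw [h2] at h1
  calc c * x ^ β ≤ c * (θ / c) := mul_le_mul_of_nonneg_left h1 hc.le
  _ = θ := by field_simp


section Main
variable {E : Type*} [NormedAddCommGroup E] [NormedSpace ℝ E] [CompleteSpace E]
variable {S : Set E} {Q : E → E} {C β : ℝ}

lemma tendsto_Q_comp (hC : 0 < C) (hβ : 0 < β)
    (hHolder : ∀ u ∈ S, ∀ v ∈ S, ‖Q u - Q v‖ ≤ C * ‖u - v‖ ^ β)
    {α : Type*} {l : Filter α} {f : α → E} {y : E} (hy : y ∈ S)
    (hfS : ∀ᶠ x in l, f x ∈ S) (hf : Tendsto f l (𝓝 y)) :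
    Tendsto (fun x => Q (f x)) l (𝓝 (Q y)) := by
  rw [Metric.tendsto_nhds]
  intro ε hε
  obtain ⟨δ, hδ0, hδ⟩ := rpow_small hC hβ (half_pos hε)
  filter_upwards [hfS, Metric.tendsto_nhds.1 hf δ hδ0] with x hxS hxd
  have h1 : dist (Q (f x)) (Q y) ≤ C * dist (f x) y ^ β := by
    rw [dist_eq_norm, dist_eq_norm]
    exact hHolder _ hxS _ hy
  have h2 := hδ _ dist_nonneg hxd.le
  linarith [half_lt_self hε]

lemma contOn_Q_comp (hC : 0 < C) (hβ : 0 < β)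
    (hHolder : ∀ u ∈ S, ∀ v ∈ S, ‖Q u - Q v‖ ≤ C * ‖u - v‖ ^ β)
    {f : ℝ → E} {A : Set ℝ} (hf : ContinuousOn f A) (hfS : ∀ x ∈ A, f x ∈ S) :
    ContinuousOn (fun t => Q (f t)) A := by
  intro x hx
  exact tendsto_Q_comp hC hβ hHolder (hfS x hx)
    (eventually_mem_nhdsWithin.mono fun y hy => hfS y hy) (hf x hx)

lemma lip_contOn {u : ℝ → E} {b L : ℝ} (hL : 0 ≤ L)
    (h : ∀ s t, 0 ≤ s → s ≤ t → t ≤ b → ‖u t - u s‖ ≤ L * (t - s)) :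
    ContinuousOn u (Icc 0 b) := by
  intro x hx
  rw [Metric.continuousWithinAt_iff]
  intro ε hε
  refine ⟨ε / (L + 1), by positivity, ?_⟩
  intro y hy hd
  have key : ‖u y - u x‖ ≤ L * |y - x| := by
    rcases le_total x y with hxy | hxy
    · have := h x y hx.1 hxy hy.2
      rwa [abs_of_nonneg (by linarith)]
    · have := h y x hy.1 hxy hx.2
      rw [abs_of_nonpos (by linarith)]
      rw [← norm_neg]
      simpa [neg_sub] using this
  rw [Real.dist_eq] at hd
  rw [dist_eq_norm]
  calc ‖u y - u x‖ ≤ L * |y - x| := key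
  _ ≤ L * (ε / (L + 1)) := mul_le_mul_of_nonneg_left hd.le hL
  _ < ε := by
      have h1 : L / (L + 1) < 1 := by
        rw [div_lt_one (by linarith)]; linarith
      calc L * (ε / (L + 1)) = (L / (L+1)) * ε := by ring
      _ < 1 * ε := mul_lt_mul_of_pos_right h1 hε
      _ = ε := one_mul ε

/-- `u` is an `ε`-approximate solution on `[0, b]`. -/
def ApproxSol (S : Set E) (Q : E → E) (u0 : E) (M ε b : ℝ) (u : ℝ → E) : Prop :=
  u 0 = u0 ∧ (∀ t, 0 ≤ t → t ≤ b → u t ∈ S) ∧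
  (∀ s t, 0 ≤ s → s ≤ t → t ≤ b → ‖u t - u s‖ ≤ (M + 1) * (t - s)) ∧
  (∀ s t, 0 ≤ s → s ≤ t → t ≤ b → ‖u t - u s - ∫ r in s..t, Q (u r)‖ ≤ ε * (t - s))

lemma ApproxSol.contOn {u0 : E} {M ε b : ℝ} {u : ℝ → E} (hM : 0 ≤ M)
    (h : ApproxSol S Q u0 M ε b u) : ContinuousOn u (Icc 0 b) :=
  lip_contOn (by linarith) h.2.2.1

lemma ApproxSol.integrableQ (hC : 0 < C) (hβ : 0 < β)
    (hHolder : ∀ u ∈ S, ∀ v ∈ S, ‖Q u - Q v‖ ≤ C * ‖u - v‖ ^ β)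
    {u0 : E} {M ε b : ℝ} {u : ℝ → E} (hM : 0 ≤ M)
    (h : ApproxSol S Q u0 M ε b u) {s t : ℝ} (hs : 0 ≤ s) (hst : s ≤ t) (htb : t ≤ b) :
    IntervalIntegrable (fun r => Q (u r)) volume s t := by
  apply ContinuousOn.intervalIntegrable
  apply contOn_Q_comp hC hβ hHolder
  · apply (h.contOn hM).mono
    rw [uIcc_of_le hst]
    exact Icc_subset_Icc hs htb
  · rw [uIcc_of_le hst]
    intro x hx
    exact h.2.1 x (hs.trans hx.1) (hx.2.trans htb)

lemma approx_onestep_est (hC : 0 < C) (hβ : 0 < β)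
    (hHolder : ∀ u ∈ S, ∀ v ∈ S, ‖Q u - Q v‖ ≤ C * ‖u - v‖ ^ β)
    {u0 : E} {M ε T : ℝ} (hM : 0 ≤ M) {u : ℝ → E}
    (h : ApproxSol S Q u0 M ε T u) {s τ : ℝ} (hs0 : 0 ≤ s) (hsτ : s ≤ τ) (hτT : τ ≤ T) :
    ‖u τ - u s - (τ - s) • Q (u τ)‖ ≤ ε * (τ - s) + C * ((M + 1) * (τ - s)) ^ β * (τ - s) := by
  have hint := h.integrableQ hC hβ hHolder hM hs0 hsτ hτT
  have hsplit : u τ - u s - (τ - s) • Q (u τ) =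
      (u τ - u s - ∫ r in s..τ, Q (u r)) + ((∫ r in s..τ, Q (u r)) - (τ - s) • Q (u τ)) := by
    abel
  rw [hsplit]
  have hA : ‖u τ - u s - ∫ r in s..τ, Q (u r)‖ ≤ ε * (τ - s) := h.2.2.2 s τ hs0 hsτ hτT
  have hBeq : (∫ r in s..τ, Q (u r)) - (τ - s) • Q (u τ)
      = ∫ r in s..τ, (Q (u r) - Q (u τ)) := by
    rw [intervalIntegral.integral_sub hint intervalIntegrable_const,
      intervalIntegral.integral_const]
  have hB : ‖(∫ r in s..τ, Q (u r)) - (τ - s) • Q (u τ)‖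
      ≤ C * ((M + 1) * (τ - s)) ^ β * (τ - s) := by
    rw [hBeq]
    have := intervalIntegral.norm_integral_le_of_norm_le_const
      (C := C * ((M + 1) * (τ - s)) ^ β) (f := fun r => Q (u r) - Q (u τ)) (a := s) (b := τ) ?_
    · rwa [abs_of_nonneg (by linarith)] at this
    · intro x hx
      rw [uIoc_of_le hsτ] at hx
      have hx0 : 0 ≤ x := hs0.trans hx.1.le
      have hxτ : x ≤ τ := hx.2
      have hd : ‖u x - u τ‖ ≤ (M + 1) * (τ - s) := by
        rw [← norm_neg, neg_sub]
        calc ‖u τ - u x‖ ≤ (M + 1) * (τ - x) := h.2.2.1 x τ hx0 hxτ hτT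
        _ ≤ (M + 1) * (τ - s) := by
            apply mul_le_mul_of_nonneg_left _ (by linarith)
            linarith [hx.1]
      calc ‖Q (u x) - Q (u τ)‖ ≤ C * ‖u x - u τ‖ ^ β :=
            hHolder _ (h.2.1 x hx0 (hxτ.trans hτT)) _ (h.2.1 τ (hs0.trans hsτ) hτT)
      _ ≤ C * ((M + 1) * (τ - s)) ^ β := by
            apply mul_le_mul_of_nonneg_left _ hC.le
            exact Real.rpow_le_rpow (norm_nonneg _) hd hβ.le
  calc _ ≤ ‖u τ - u s - ∫ r in s..τ, Q (u r)‖
        + ‖(∫ r in s..τ, Q (u r)) - (τ - s) • Q (u τ)‖ := norm_add_le _ _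
  _ ≤ _ := add_le_add hA hB

lemma approx_compare (hC : 0 < C) (hβ : 0 < β)
    (hHolder : ∀ u ∈ S, ∀ v ∈ S, ‖Q u - Q v‖ ≤ C * ‖u - v‖ ^ β)
    (hLip : ∀ u ∈ S, ∀ v ∈ S, bracket (Q u - Q v) (u - v) ≤ C * ‖u - v‖)
    {u0 : E} {M ε1 ε2 T : ℝ} (hM : 0 ≤ M) (hε1 : 0 ≤ ε1) (hε2 : 0 ≤ ε2) (hT : 0 ≤ T)
    {u1 u2 : ℝ → E} (h1 : ApproxSol S Q u0 M ε1 T u1) (h2 : ApproxSol S Q u0 M ε2 T u2) :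
    ∀ t, 0 ≤ t → t ≤ T → ‖u1 t - u2 t‖ ≤ Real.exp (C * T) * ((ε1 + ε2) * T) := by
  intro t ht0 htT
  set g : ℝ → ℝ := fun r => ‖u1 r - u2 r‖ with hg_def
  have hg0 : g 0 = 0 := by simp [hg_def, h1.1, h2.1]
  have hgc : ContinuousOn g (Icc 0 t) := by
    apply ContinuousOn.norm
    exact ((h1.contOn hM).sub (h2.contOn hM)).mono (Icc_subset_Icc (le_refl 0) htT)
  have hMpos : (0:ℝ) < M + 1 := by linarith
  have hc0pos : 0 < 2 * C * (M + 1) ^ β := by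
    have := Real.rpow_pos_of_pos hMpos β
    positivity
  have hslope : ∀ τ ∈ Ioc (0:ℝ) t, ∀ r : ℝ, C * g τ + (ε1 + ε2) < r →
      ∃ᶠ s in 𝓝[<] τ, (τ - s)⁻¹ * (g τ - g s) < r := by
    intro τ hτ r hr
    set θ : ℝ := r - (C * g τ + (ε1 + ε2)) with hθ_def
    have hθ : 0 < θ := by simp only [hθ_def]; linarith
    obtain ⟨δ1, hδ10, hδ1⟩ := rpow_small hc0pos hβ (half_pos hθ)
    have hlo : max (τ - δ1) 0 < τ := max_lt (by linarith) hτ.1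
    have hIoo : Ioo (max (τ - δ1) 0) τ ∈ 𝓝[<] τ :=
      Ioo_mem_nhdsLT_of_mem ⟨hlo, le_refl τ⟩
    apply Eventually.frequently
    filter_upwards [hIoo] with s hsm
    have hs0 : 0 ≤ s := le_of_lt (lt_of_le_of_lt (le_max_right _ _) hsm.1)
    have hsτ : s < τ := hsm.2
    have hks : τ - s ≤ δ1 := by
      have := lt_of_le_of_lt (le_max_left _ _) hsm.1
      linarith
    have hk : 0 < τ - s := by linarith
    have hτT : τ ≤ T := hτ.2.trans htT
    have e1 := approx_onestep_est hC hβ hHolder hM h1 hs0 hsτ.le hτT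
    have e2 := approx_onestep_est hC hβ hHolder hM h2 hs0 hsτ.le hτT
    set wτ : E := u1 τ - u2 τ
    set φ : E := Q (u1 τ) - Q (u2 τ)
    have hid : u1 s - u2 s = (wτ - (τ - s) • φ)
        - (u1 τ - u1 s - (τ - s) • Q (u1 τ)) + (u2 τ - u2 s - (τ - s) • Q (u2 τ)) := by
      simp only [wτ, φ, smul_sub]
      abel
    have hlow : ‖wτ - (τ - s) • φ‖ - ‖u1 τ - u1 s - (τ - s) • Q (u1 τ)‖
        - ‖u2 τ - u2 s - (τ - s) • Q (u2 τ)‖ ≤ g s := by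
      set A : E := wτ - (τ - s) • φ
      set B : E := u1 τ - u1 s - (τ - s) • Q (u1 τ)
      set Y : E := u2 τ - u2 s - (τ - s) • Q (u2 τ)
      have hgseq : g s = ‖A - B + Y‖ := by
        rw [hg_def]
        congr 1
        rw [← hid]
      have t2 : ‖A‖ - ‖B‖ ≤ ‖A - B‖ := norm_sub_norm_le A B
      have t1 : ‖A - B‖ - ‖Y‖ ≤ ‖A - B + Y‖ := by
        have := norm_sub_le (A - B + Y) Y
        rw [add_sub_cancel_right] at this
        linarith
      rw [hgseq]
      linarith
    have hbr : ‖wτ‖ - ‖wτ - (τ - s) • φ‖ ≤ (τ - s) * (C * g τ) := by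
      have hb := norm_sub_le_bracket φ wτ hk
      have hl := hLip (u1 τ) (h1.2.1 τ (hs0.trans hsτ.le) hτT)
        (u2 τ) (h2.2.1 τ (hs0.trans hsτ.le) hτT)
      calc ‖wτ‖ - ‖wτ - (τ - s) • φ‖ ≤ (τ - s) * bracket φ wτ := hb
      _ ≤ (τ - s) * (C * g τ) := by
          apply mul_le_mul_of_nonneg_left _ hk.le
          exact hl
    have hsmall : 2 * (C * ((M + 1) * (τ - s)) ^ β) ≤ θ / 2 := by
      have h1' := hδ1 (τ - s) hk.le hks
      have h2' : (2 * C * (M + 1) ^ β) * (τ - s) ^ β = 2 * (C * ((M + 1) * (τ - s)) ^ β) := by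
        rw [Real.mul_rpow hMpos.le hk.le]
        ring
      linarith [h1', h2'.ge]
    have hslope_bound : g τ - g s ≤ (τ - s) * (C * g τ + (ε1 + ε2) + θ / 2) := by
      have : g τ - g s ≤ ‖wτ‖ - ‖wτ - (τ - s) • φ‖
          + ‖u1 τ - u1 s - (τ - s) • Q (u1 τ)‖ + ‖u2 τ - u2 s - (τ - s) • Q (u2 τ)‖ := by
        have : g τ = ‖wτ‖ := rfl
        linarith [hlow]
      calc g τ - g s ≤ ‖wτ‖ - ‖wτ - (τ - s) • φ‖
          + ‖u1 τ - u1 s - (τ - s) • Q (u1 τ)‖ + ‖u2 τ - u2 s - (τ - s) • Q (u2 τ)‖ := this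
      _ ≤ (τ - s) * (C * g τ) + (ε1 * (τ - s) + C * ((M + 1) * (τ - s)) ^ β * (τ - s))
          + (ε2 * (τ - s) + C * ((M + 1) * (τ - s)) ^ β * (τ - s)) := by
          linarith [hbr, e1, e2]
      _ ≤ (τ - s) * (C * g τ + (ε1 + ε2) + θ / 2) := by nlinarith [hsmall, hk.le]
    have : (τ - s)⁻¹ * (g τ - g s) ≤ C * g τ + (ε1 + ε2) + θ / 2 := by
      rw [inv_mul_le_iff₀ hk]
      calc g τ - g s ≤ (τ - s) * (C * g τ + (ε1 + ε2) + θ / 2) := hslope_bound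
      _ = _ := by ring
    calc (τ - s)⁻¹ * (g τ - g s) ≤ C * g τ + (ε1 + ε2) + θ / 2 := this
    _ < r := by simp only [hθ_def]; linarith
  have hmain := gronwall_left ht0 hC (by linarith : (0:ℝ) ≤ ε1 + ε2) hgc hslope
  rw [hg0] at hmain
  calc g t ≤ Real.exp (C * (t - 0)) * (0 + (ε1 + ε2) * (t - 0)) := hmain
  _ ≤ Real.exp (C * T) * ((ε1 + ε2) * T) := by
      rw [sub_zero, zero_add]
      apply mul_le_mul
      · exact Real.exp_le_exp.2 (by nlinarith)
      · nlinarith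
      · nlinarith
      · positivity

/-- Existence of `ε`-approximate solutions on all of `[0, T]`, by Zorn's lemma. -/
lemma approx_exists (hSconv : Convex ℝ S) (hScl : IsClosed S)
    (hC : 0 < C) (hβ : 0 < β)
    (hHolder : ∀ u ∈ S, ∀ v ∈ S, ‖Q u - Q v‖ ≤ C * ‖u - v‖ ^ β)
    {u0 : E} (hu0 : u0 ∈ S) {M : ℝ} (hM0 : 0 ≤ M) (hM : ∀ u ∈ S, ‖Q u‖ ≤ M)
    (hst : ∀ u ∈ S, ∀ η, 0 < η → ∀ h0, 0 < h0 →
      ∃ h, 0 < h ∧ h < h0 ∧ ∃ w ∈ S, ‖w - u - h • Q u‖ ≤ η * h)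
    {T ε : ℝ} (hT : 0 ≤ T) (hε : 0 < ε) (hε1 : ε ≤ 1) :
    ∃ u : ℝ → E, ApproxSol S Q u0 M ε T u := by
  classical
  -- the partially ordered set of approximate solutions on subintervals
  let α := {p : ℝ × (ℝ → E) // 0 ≤ p.1 ∧ p.1 ≤ T ∧ ApproxSol S Q u0 M ε p.1 p.2}
  let r : α → α → Prop := fun p q =>
    p.1.1 ≤ q.1.1 ∧ ∀ t, 0 ≤ t → t ≤ p.1.1 → p.1.2 t = q.1.2 t
  have hbase_prop : ApproxSol S Q u0 M ε 0 (fun _ => u0) := by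
    refine ⟨rfl, fun t ht0 ht1 => hu0, ?_, ?_⟩
    · intro s t h0 h1 h2
      have : s = t := le_antisymm h1 (h2.trans h0)
      subst this
      simp
    · intro s t h0 h1 h2
      have : s = t := le_antisymm h1 (h2.trans h0)
      subst this
      simp
  let base : α := ⟨(0, fun _ => u0), le_refl 0, hT, hbase_prop⟩
  have hrtrans : ∀ {a b c : α}, r a b → r b c → r a c := by
    rintro a b c ⟨h1, h2⟩ ⟨h3, h4⟩
    exact ⟨h1.trans h3, fun t ht0 htp => (h2 t ht0 htp).trans (h4 t ht0 (htp.trans h1))⟩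
  have hchains : ∀ c : Set α, IsChain r c → ∃ ub, ∀ a ∈ c, r a ub := by
    intro c hc
    rcases Set.eq_empty_or_nonempty c with rfl | hce
    · exact ⟨base, fun a ha => absurd ha (notMem_empty a)⟩
    have hagree : ∀ p ∈ c, ∀ q ∈ c, ∀ t, 0 ≤ t → t ≤ p.1.1 → t ≤ q.1.1 →
        p.1.2 t = q.1.2 t := by
      intro p hp q hq t ht0 htp htq
      rcases eq_or_ne p q with rfl | hne
      · rfl
      rcases hc hp hq hne with h | h
      · exact h.2 t ht0 htp
      · exact (h.2 t ht0 htq).symm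
    set bs : ℝ := sSup ((fun p : α => p.1.1) '' c) with hbs_def
    have hbdd : BddAbove ((fun p : α => p.1.1) '' c) := by
      refine ⟨T, ?_⟩
      rintro x ⟨p, hp, rfl⟩
      exact p.2.2.1
    have himne : ((fun p : α => p.1.1) '' c).Nonempty := hce.image _
    have hbsT : bs ≤ T := csSup_le himne (by rintro x ⟨p, hp, rfl⟩; exact p.2.2.1)
    have hble : ∀ p ∈ c, p.1.1 ≤ bs := fun p hp => le_csSup hbdd ⟨p, hp, rfl⟩
    have hbs0 : 0 ≤ bs := by
      obtain ⟨p, hp⟩ := hce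
      exact p.2.1.trans (hble p hp)
    by_cases hatt : ∃ p ∈ c, p.1.1 = bs
    · obtain ⟨p, hp, hpb⟩ := hatt
      refine ⟨p, fun q hq => ⟨(hble q hq).trans_eq hpb.symm, ?_⟩⟩
      intro t ht0 htq
      exact hagree q hq p hp t ht0 htq (htq.trans ((hble q hq).trans_eq hpb.symm))
    · push_neg at hatt
      have hplt : ∀ p ∈ c, p.1.1 < bs := fun p hp => (hble p hp).lt_of_ne (hatt p hp)
      have hbspos : 0 < bs := by
        obtain ⟨p, hp⟩ := hce
        exact lt_of_le_of_lt p.2.1 (hplt p hp)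
      have hlt : ∀ x, x < bs → ∃ p ∈ c, x < p.1.1 := by
        intro x hx
        obtain ⟨y, ⟨p, hp, rfl⟩, hxy⟩ := exists_lt_of_lt_csSup himne hx
        exact ⟨p, hp, hxy⟩
      -- the glued function on `[0, bs)`
      set v : ℝ → E := fun t =>
        if h : ∃ p : α, p ∈ c ∧ t ≤ p.1.1 then h.choose.1.2 t else u0 with hv_def
      have hv : ∀ t, 0 ≤ t → ∀ p ∈ c, t ≤ p.1.1 → v t = p.1.2 t := by
        intro t ht0 p hp htp
        have hex : ∃ q : α, q ∈ c ∧ t ≤ q.1.1 := ⟨p, hp, htp⟩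
        simp only [hv_def, dif_pos hex]
        exact hagree hex.choose hex.choose_spec.1 p hp t ht0 hex.choose_spec.2 htp
      have hv0 : v 0 = u0 := by
        obtain ⟨p, hp⟩ := hce
        rw [hv 0 le_rfl p hp p.2.1]
        exact p.2.2.2.1
      have hvS : ∀ t, 0 ≤ t → t < bs → v t ∈ S := by
        intro t ht0 htb
        obtain ⟨p, hp, htp⟩ := hlt t htb
        rw [hv t ht0 p hp htp.le]
        exact p.2.2.2.2.1 t ht0 htp.le
      have hvlip : ∀ s t, 0 ≤ s → s ≤ t → t < bs → ‖v t - v s‖ ≤ (M + 1) * (t - s) := by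
        intro s t hs0 hst htb
        obtain ⟨p, hp, htp⟩ := hlt t htb
        rw [hv t (hs0.trans hst) p hp htp.le, hv s hs0 p hp (hst.trans htp.le)]
        exact p.2.2.2.2.2.1 s t hs0 hst htp.le
      have hvint : ∀ s t, 0 ≤ s → s ≤ t → t < bs →
          ‖v t - v s - ∫ x in s..t, Q (v x)‖ ≤ ε * (t - s) := by
        intro s t hs0 hst htb
        obtain ⟨p, hp, htp⟩ := hlt t htb
        have hcongr : ∫ x in s..t, Q (v x) = ∫ x in s..t, Q (p.1.2 x) := by
          apply intervalIntegral.integral_congr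
          intro x hx
          rw [uIcc_of_le hst] at hx
          show Q (v x) = Q ((↑p : ℝ × (ℝ → E)).2 x)
          rw [hv x (hs0.trans hx.1) p hp (hx.2.trans htp.le)]
        rw [hv t (hs0.trans hst) p hp htp.le, hv s hs0 p hp (hst.trans htp.le), hcongr]
        exact p.2.2.2.2.2.2 s t hs0 hst htp.le
      -- the limit at `bs`
      set tn : ℕ → ℝ := fun n => max 0 (bs - ((n:ℝ) + 1)⁻¹) with htn_def
      have htn0 : ∀ n, 0 ≤ tn n := fun n => le_max_left _ _
      have htnlt : ∀ n, tn n < bs := by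
        intro n
        apply max_lt hbspos
        have : (0:ℝ) < ((n:ℝ) + 1)⁻¹ := by positivity
        linarith
      have htn_tendsto : Tendsto tn atTop (𝓝 bs) := by
        have h1 : Tendsto (fun n : ℕ => bs - ((n:ℝ) + 1)⁻¹) atTop (𝓝 (bs - 0)) :=
          tendsto_const_nhds.sub (tendsto_one_div_add_atTop_nhds_zero_nat.congr
            (fun n => by rw [one_div]))
        rw [sub_zero] at h1
        have h2 : Tendsto tn atTop (𝓝 (max 0 bs)) :=
          tendsto_const_nhds.max h1
        rwa [max_eq_right hbs0] at h2
      have hwcauchy : CauchySeq (fun n => v (tn n)) := by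
        rw [Metric.cauchySeq_iff]
        intro δ hδ
        have htc : CauchySeq tn := htn_tendsto.cauchySeq
        rw [Metric.cauchySeq_iff] at htc
        obtain ⟨N, hN⟩ := htc (δ / (M + 2)) (by positivity)
        refine ⟨N, fun m hm n hn => ?_⟩
        have key : ∀ a b : ℕ, tn a ≤ tn b → dist (v (tn b)) (v (tn a)) < δ →
            True := fun _ _ _ _ => trivial
        have hdist : ∀ a b : ℕ, tn a ≤ tn b → dist (tn b) (tn a) < δ / (M + 2) →
            dist (v (tn b)) (v (tn a)) < δ := by
          intro a b hab hd
          rw [dist_eq_norm]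
          calc ‖v (tn b) - v (tn a)‖ ≤ (M + 1) * (tn b - tn a) :=
                hvlip _ _ (htn0 a) hab (htnlt b)
          _ ≤ (M + 1) * dist (tn b) (tn a) := by
              rw [Real.dist_eq, abs_of_nonneg (by linarith)]
          _ < (M + 2) * (δ / (M + 2)) := by
              apply mul_lt_mul' (by linarith) (hd.trans_le (le_refl _)) dist_nonneg
                (by linarith)
          _ = δ := by field_simp
        rcases le_total (tn n) (tn m) with h | h
        · exact hdist n m h (hN m hm n hn)
        · rw [dist_comm]
          exact hdist m n h (hN n hn m hm)
      obtain ⟨L, hL⟩ := cauchySeq_tendsto_of_complete hwcauchy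
      have hLS : L ∈ S :=
        hScl.mem_of_tendsto hL (Eventually.of_forall fun n => hvS _ (htn0 n) (htnlt n))
      -- the extended function
      set us : ℝ → E := fun t => if t < bs then v t else L with hus_def
      have husv : ∀ t, t < bs → us t = v t := fun t ht => if_pos ht
      have husb : us bs = L := if_neg (lt_irrefl bs)
      have hus0 : us 0 = u0 := by rw [husv 0 hbspos, hv0]
      have husS : ∀ t, 0 ≤ t → t ≤ bs → us t ∈ S := by
        intro t ht0 htb
        rcases lt_or_eq_of_le htb with h | h
        · rw [husv t h]; exact hvS t ht0 h
        · subst h; rw [husb]; exact hLS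
      have huslip : ∀ s t, 0 ≤ s → s ≤ t → t ≤ bs → ‖us t - us s‖ ≤ (M + 1) * (t - s) := by
        intro s t hs0 hst htb
        rcases lt_or_eq_of_le htb with h | h
        · rw [husv t h, husv s (lt_of_le_of_lt hst h)]
          exact hvlip s t hs0 hst h
        · subst h
          rcases lt_or_eq_of_le hst with h' | h'
          · rw [husb, husv s h']
            have hev : ∀ᶠ n in atTop, s ≤ tn n :=
              htn_tendsto.eventually_const_le h'
            have hnorm : Tendsto (fun n => ‖v (tn n) - v s‖) atTop (𝓝 ‖L - v s‖) :=
              (hL.sub tendsto_const_nhds).norm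
            apply le_of_tendsto hnorm
            filter_upwards [hev] with n hn
            calc ‖v (tn n) - v s‖ ≤ (M + 1) * (tn n - s) := hvlip s (tn n) hs0 hn (htnlt n)
            _ ≤ (M + 1) * (bs - s) := by
                apply mul_le_mul_of_nonneg_left _ (by linarith)
                linarith [htnlt n]
          · subst h'
            simp
      have huscont : ContinuousOn us (Icc 0 bs) := lip_contOn (by linarith) huslip
      have husint : ∀ s t, 0 ≤ s → s ≤ t → t ≤ bs →
          ‖us t - us s - ∫ x in s..t, Q (us x)‖ ≤ ε * (t - s) := by
        intro s t hs0 hst htb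
        have hcongr : ∀ a b, 0 ≤ a → a ≤ b → b < bs →
            ∫ x in a..b, Q (us x) = ∫ x in a..b, Q (v x) := by
          intro a b ha hab hbb
          apply intervalIntegral.integral_congr
          intro x hx
          rw [uIcc_of_le hab] at hx
          show Q (us x) = Q (v x)
          rw [husv x (lt_of_le_of_lt hx.2 hbb)]
        rcases lt_or_eq_of_le htb with h | h
        · rw [husv t h, husv s (lt_of_le_of_lt hst h), hcongr s t hs0 hst h]
          exact hvint s t hs0 hst h
        · subst h
          rcases lt_or_eq_of_le hst with h' | h'
          · -- s < bs, t = bs : pass to the limit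
            have hIint : IntervalIntegrable (fun x => Q (us x)) volume s bs := by
              apply ContinuousOn.intervalIntegrable
              apply contOn_Q_comp hC hβ hHolder
              · apply huscont.mono
                rw [uIcc_of_le h'.le]
                exact Icc_subset_Icc hs0 (le_refl bs)
              · rw [uIcc_of_le h'.le]
                intro x hx
                exact husS x (hs0.trans hx.1) hx.2
            have hev : ∀ᶠ n in atTop, s ≤ tn n := htn_tendsto.eventually_const_le h'
            have hbound : ∀ n, s ≤ tn n →
                ‖v (tn n) - v s - ∫ x in s..(tn n), Q (us x)‖ ≤ ε * (bs - s) := by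
              intro n hn
              have := hvint s (tn n) hs0 hn (htnlt n)
              rw [← hcongr s (tn n) hs0 hn (htnlt n)] at this
              calc ‖v (tn n) - v s - ∫ x in s..(tn n), Q (us x)‖ ≤ ε * (tn n - s) := this
              _ ≤ ε * (bs - s) := by
                  apply mul_le_mul_of_nonneg_left _ hε.le
                  linarith [htnlt n]
            have htail : Tendsto (fun n => ∫ x in s..(tn n), Q (us x)) atTop
                (𝓝 (∫ x in s..bs, Q (us x))) := by
              rw [Metric.tendsto_atTop]
              intro δ hδ
              have hev2 : ∀ᶠ n in atTop, bs - tn n < δ / (M + 1) ∧ s ≤ tn n := by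
                refine Filter.Eventually.and ?_ hev
                have := Metric.tendsto_atTop.1 htn_tendsto (δ / (M + 1)) (by positivity)
                obtain ⟨N, hN⟩ := this
                filter_upwards [eventually_ge_atTop N] with n hn
                have := hN n hn
                rw [Real.dist_eq, abs_sub_lt_iff] at this
                linarith [this.2]
              obtain ⟨N, hN⟩ := (eventually_atTop.1 hev2)
              refine ⟨N, fun n hn => ?_⟩
              obtain ⟨hn1, hn2⟩ := hN n hn
              rw [dist_eq_norm]
              have hsplit : (∫ x in s..bs, Q (us x)) - (∫ x in s..(tn n), Q (us x))
                  = ∫ x in (tn n)..bs, Q (us x) := by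
                rw [eq_comm, eq_sub_iff_add_eq, add_comm]
                have hii1 : IntervalIntegrable (fun x => Q (us x)) volume s (tn n) := by
                  apply hIint.mono_set
                  rw [uIcc_of_le hn2, uIcc_of_le h'.le]
                  exact Icc_subset_Icc (le_refl s) (htnlt n).le
                have hii2 : IntervalIntegrable (fun x => Q (us x)) volume (tn n) bs := by
                  apply hIint.mono_set
                  rw [uIcc_of_le (htnlt n).le, uIcc_of_le h'.le]
                  exact Icc_subset_Icc hn2 (le_refl bs)
                exact intervalIntegral.integral_add_adjacent_intervals hii1 hii2
              rw [← norm_neg, neg_sub, hsplit]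
              have hbnd := intervalIntegral.norm_integral_le_of_norm_le_const
                (C := M) (f := fun x => Q (us x)) (a := tn n) (b := bs) ?_
              · calc ‖∫ x in (tn n)..bs, Q (us x)‖ ≤ M * |bs - tn n| := hbnd
                _ ≤ (M + 1) * |bs - tn n| := by
                    apply mul_le_mul_of_nonneg_right (by linarith) (abs_nonneg _)
                _ = (M + 1) * (bs - tn n) := by rw [abs_of_nonneg (by linarith [htnlt n])]
                _ < (M + 1) * (δ / (M + 1)) :=
                    mul_lt_mul_of_pos_left hn1 (by linarith)
                _ = δ := by field_simp
              · intro x hx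
                rw [uIoc_of_le (htnlt n).le] at hx
                exact hM _ (husS x ((htn0 n).trans hx.1.le) hx.2)
            have hfull : Tendsto (fun n => v (tn n) - v s - ∫ x in s..(tn n), Q (us x))
                atTop (𝓝 (L - v s - ∫ x in s..bs, Q (us x))) :=
              (hL.sub tendsto_const_nhds).sub htail
            rw [husb, husv s h']
            apply le_of_tendsto hfull.norm
            filter_upwards [hev] with n hn
            exact hbound n hn
          · subst h'
            simp
      -- assemble the upper bound
      refine ⟨⟨(bs, us), hbs0, hbsT, hus0, husS, huslip, husint⟩, ?_⟩
      intro q hq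
      refine ⟨hble q hq, ?_⟩
      intro t ht0 htq
      show (↑q : ℝ × (ℝ → E)).2 t = us t
      rw [husv t (lt_of_le_of_lt htq (hplt q hq))]
      exact (hv t ht0 q hq htq).symm
  obtain ⟨m, hm⟩ := exists_maximal_of_chains_bounded hchains hrtrans
  -- the maximal element reaches T
  rcases eq_or_lt_of_le m.2.2.1 with hmT | hmT
  · have hprop := m.2.2.2
    rw [hmT] at hprop
    exact ⟨m.1.2, hprop⟩
  · exfalso
    set b : ℝ := m.1.1 with hb_def
    set x : E := m.1.2 b with hx_def
    have hxS : x ∈ S := m.2.2.2.2.1 b m.2.1 (le_refl b)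
    have hMpos : (0:ℝ) < M + 1 := by linarith
    obtain ⟨δ0, hδ00, hδ0⟩ := rpow_small (c := C * (M + 1) ^ β)
      (by positivity : (0:ℝ) < C * (M+1)^β) hβ (half_pos hε)
    set δ : ℝ := min δ0 (T - b) with hδ_def
    have hδpos : 0 < δ := lt_min hδ00 (by linarith)
    obtain ⟨h, hh0, hhδ, w, hwS, hw⟩ := hst x hxS (ε / 2) (half_pos hε) δ hδpos
    have hbT : b + h ≤ T := by
      have : h < T - b := hhδ.trans_le (min_le_right _ _)
      linarith
    have hb0 : 0 ≤ b := m.2.1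
    have hδ0' : h ≤ δ0 := hhδ.le.trans (min_le_left _ _)
    have hQx : ‖Q x‖ ≤ M := hM x hxS
    have hwx : ‖w - x‖ ≤ (M + 1) * h := by
      calc ‖w - x‖ = ‖w - x - h • Q x + h • Q x‖ := by rw [sub_add_cancel]
      _ ≤ ‖w - x - h • Q x‖ + ‖h • Q x‖ := norm_add_le _ _
      _ ≤ ε / 2 * h + h * M := by
          have he : ‖h • Q x‖ = h * ‖Q x‖ := by
            rw [norm_smul, Real.norm_eq_abs, abs_of_pos hh0]
          rw [he]
          exact add_le_add hw (mul_le_mul_of_nonneg_left hQx hh0.le)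
      _ ≤ (M + 1) * h := by nlinarith
    set sl : E := h⁻¹ • (w - x) with hsl_def
    have hslQ : ‖sl - Q x‖ ≤ ε / 2 := by
      have he : h⁻¹ • (w - x - h • Q x) = sl - Q x := by
        rw [smul_sub, smul_smul, inv_mul_cancel₀ hh0.ne', one_smul, hsl_def]
      rw [← he, norm_smul, Real.norm_eq_abs, abs_of_pos (inv_pos.2 hh0)]
      calc h⁻¹ * ‖w - x - h • Q x‖ ≤ h⁻¹ * (ε / 2 * h) :=
            mul_le_mul_of_nonneg_left hw (inv_pos.2 hh0).le
      _ = ε / 2 := by field_simp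
    set un : ℝ → E := fun t =>
      if t ≤ b then m.1.2 t else x + ((min t (b + h) - b) / h) • (w - x) with hun_def
    have hun_old : ∀ t, t ≤ b → un t = m.1.2 t := fun t ht => if_pos ht
    have hun_seg : ∀ t, b ≤ t → t ≤ b + h → un t = x + ((t - b) / h) • (w - x) := by
      intro t hbt htb
      rcases eq_or_lt_of_le hbt with rfl | h'
      · rw [hun_old b le_rfl]
        simp [hx_def]
      · rw [hun_def]
        simp only [if_neg (not_le.2 h'), min_eq_left htb]
    have hub : un b = x := by rw [hun_old b le_rfl]
    have hun_diff : ∀ s t, b ≤ s → s ≤ t → t ≤ b + h →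
        un t - un s = ((t - s) / h) • (w - x) := by
      intro s t hbs hst' htb
      rw [hun_seg t (hbs.trans hst') htb, hun_seg s hbs (hst'.trans htb)]
      have hcoef : (t - b) / h - (s - b) / h = (t - s) / h := by ring
      calc x + ((t - b) / h) • (w - x) - (x + ((s - b) / h) • (w - x))
          = ((t - b) / h - (s - b) / h) • (w - x) := by module
      _ = ((t - s) / h) • (w - x) := by rw [hcoef]
    have hun_memS : ∀ t, 0 ≤ t → t ≤ b + h → un t ∈ S := by
      intro t ht0 htb
      rcases le_or_gt t b with h' | h'
      · rw [hun_old t h']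
        exact m.2.2.2.2.1 t ht0 h'
      · rw [hun_seg t h'.le htb]
        have hθ0 : 0 ≤ (t - b) / h := div_nonneg (by linarith) hh0.le
        have hθ1 : (t - b) / h ≤ 1 := by rw [div_le_one hh0]; linarith
        have hmem := hSconv hxS hwS (by linarith : 0 ≤ 1 - (t - b) / h) hθ0 (by ring)
        convert hmem using 1
        module
    have hun_lip : ∀ s t, 0 ≤ s → s ≤ t → t ≤ b + h →
        ‖un t - un s‖ ≤ (M + 1) * (t - s) := by
      have hseg : ∀ s t, b ≤ s → s ≤ t → t ≤ b + h →
          ‖un t - un s‖ ≤ (M + 1) * (t - s) := by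
        intro s t hbs hst' htb
        rw [hun_diff s t hbs hst' htb, norm_smul, Real.norm_eq_abs,
          abs_of_nonneg (div_nonneg (by linarith) hh0.le)]
        calc (t - s) / h * ‖w - x‖ ≤ (t - s) / h * ((M + 1) * h) :=
              mul_le_mul_of_nonneg_left hwx (div_nonneg (by linarith) hh0.le)
        _ = (M + 1) * (t - s) := by field_simp
      intro s t hs0 hst' htb
      rcases le_or_gt t b with h' | h'
      · rw [hun_old t h', hun_old s (hst'.trans h')]
        exact m.2.2.2.2.2.1 s t hs0 hst' h'
      rcases le_or_gt b s with h'' | h''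
      · exact hseg s t h'' hst' htb
      · have h1 : ‖un b - un s‖ ≤ (M + 1) * (b - s) := by
          rw [hun_old s h''.le, hub, hx_def]
          exact m.2.2.2.2.2.1 s b hs0 h''.le (le_refl b)
        have h2 : ‖un t - un b‖ ≤ (M + 1) * (t - b) := hseg b t (le_refl b) h'.le htb
        calc ‖un t - un s‖ = ‖(un t - un b) + (un b - un s)‖ := by abel_nf
        _ ≤ ‖un t - un b‖ + ‖un b - un s‖ := norm_add_le _ _
        _ ≤ (M + 1) * (t - b) + (M + 1) * (b - s) := add_le_add h2 h1
        _ = (M + 1) * (t - s) := by ring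
    have hun_contS : ContinuousOn un (Icc 0 (b + h)) := lip_contOn (by linarith) hun_lip
    have hQint : ∀ s t, 0 ≤ s → s ≤ t → t ≤ b + h →
        IntervalIntegrable (fun r => Q (un r)) volume s t := by
      intro s t hs hst' htb
      apply ContinuousOn.intervalIntegrable
      apply contOn_Q_comp hC hβ hHolder
      · exact hun_contS.mono (by rw [uIcc_of_le hst']; exact Icc_subset_Icc hs htb)
      · rw [uIcc_of_le hst']
        exact fun y hy => hun_memS y (hs.trans hy.1) (hy.2.trans htb)
    have hseg_est : ∀ s t, b ≤ s → s ≤ t → t ≤ b + h →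
        ‖un t - un s - ∫ r in s..t, Q (un r)‖ ≤ ε * (t - s) := by
      intro s t hbs hst' htb
      have hs0 : 0 ≤ s := hb0.trans hbs
      have heq : un t - un s - ∫ r in s..t, Q (un r) = ∫ r in s..t, (sl - Q (un r)) := by
        rw [intervalIntegral.integral_sub intervalIntegrable_const (hQint s t hs0 hst' htb),
          intervalIntegral.integral_const, hun_diff s t hbs hst' htb, hsl_def, smul_smul,
          ← div_eq_mul_inv]
      rw [heq]
      have hbnd := intervalIntegral.norm_integral_le_of_norm_le_const
        (C := ε) (f := fun r => sl - Q (un r)) (a := s) (b := t) ?_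
      · rwa [abs_of_nonneg (by linarith)] at hbnd
      · intro y hy
        rw [uIoc_of_le hst'] at hy
        have hyb : b ≤ y := hbs.trans hy.1.le
        have hyh : y ≤ b + h := hy.2.trans htb
        have hy0 : 0 ≤ y := hb0.trans hyb
        have hxr : ‖un y - x‖ ≤ (M + 1) * h := by
          have he : un y - x = ((y - b) / h) • (w - x) := by
            have hd := hun_diff b y (le_refl b) hyb hyh
            rw [hub] at hd
            simpa using hd
          rw [he, norm_smul, Real.norm_eq_abs,
            abs_of_nonneg (div_nonneg (by linarith) hh0.le)]
          have hcoef : (y - b) / h ≤ 1 := by rw [div_le_one hh0]; linarith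
          calc (y - b) / h * ‖w - x‖ ≤ 1 * ((M + 1) * h) :=
                mul_le_mul hcoef hwx (norm_nonneg _) one_pos.le
          _ = (M + 1) * h := one_mul _
        have hQd : ‖Q x - Q (un y)‖ ≤ ε / 2 := by
          have h1 : ‖x - un y‖ ≤ (M + 1) * h := by rw [norm_sub_rev]; exact hxr
          have h2 : C * ‖x - un y‖ ^ β ≤ C * ((M + 1) * h) ^ β :=
            mul_le_mul_of_nonneg_left (Real.rpow_le_rpow (norm_nonneg _) h1 hβ.le) hC.le
          have h3 : C * ((M + 1) * h) ^ β = C * (M + 1) ^ β * h ^ β := by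
            rw [Real.mul_rpow hMpos.le hh0.le]; ring
          have h4 := hδ0 h hh0.le hδ0'
          calc ‖Q x - Q (un y)‖ ≤ C * ‖x - un y‖ ^ β :=
                hHolder x hxS (un y) (hun_memS y hy0 hyh)
          _ ≤ ε / 2 := by linarith
        calc ‖sl - Q (un y)‖ = ‖(sl - Q x) + (Q x - Q (un y))‖ := by abel_nf
        _ ≤ ‖sl - Q x‖ + ‖Q x - Q (un y)‖ := norm_add_le _ _
        _ ≤ ε / 2 + ε / 2 := add_le_add hslQ hQd
        _ = ε := by ring
    have hun_int : ∀ s t, 0 ≤ s → s ≤ t → t ≤ b + h →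
        ‖un t - un s - ∫ r in s..t, Q (un r)‖ ≤ ε * (t - s) := by
      intro s t hs0 hst' htb
      rcases le_or_gt t b with h' | h'
      · have hcongr : ∫ r in s..t, Q (un r) = ∫ r in s..t, Q (m.1.2 r) := by
          apply intervalIntegral.integral_congr
          intro y hy
          rw [uIcc_of_le hst'] at hy
          show Q (un y) = Q (m.1.2 y)
          rw [hun_old y (hy.2.trans h')]
        rw [hun_old t h', hun_old s (hst'.trans h'), hcongr]
        exact m.2.2.2.2.2.2 s t hs0 hst' h'
      rcases le_or_gt b s with h'' | h''
      · exact hseg_est s t h'' hst' htb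
      · have hsplit : ∫ r in s..t, Q (un r)
            = (∫ r in s..b, Q (un r)) + ∫ r in b..t, Q (un r) :=
          (intervalIntegral.integral_add_adjacent_intervals
            (hQint s b hs0 h''.le (by linarith)) (hQint b t hb0 h'.le htb)).symm
        have hA : ‖un b - un s - ∫ r in s..b, Q (un r)‖ ≤ ε * (b - s) := by
          have hcongr : ∫ r in s..b, Q (un r) = ∫ r in s..b, Q (m.1.2 r) := by
            apply intervalIntegral.integral_congr
            intro y hy
            rw [uIcc_of_le h''.le] at hy
            show Q (un y) = Q (m.1.2 y)
            rw [hun_old y hy.2]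
          rw [hub, hx_def, hun_old s h''.le, hcongr]
          exact m.2.2.2.2.2.2 s b hs0 h''.le (le_refl b)
        have hB : ‖un t - un b - ∫ r in b..t, Q (un r)‖ ≤ ε * (t - b) :=
          hseg_est b t (le_refl b) h'.le htb
        have hid : un t - un s - ∫ r in s..t, Q (un r)
            = (un b - un s - ∫ r in s..b, Q (un r))
              + (un t - un b - ∫ r in b..t, Q (un r)) := by
          rw [hsplit]; abel
        calc ‖un t - un s - ∫ r in s..t, Q (un r)‖
            ≤ ‖un b - un s - ∫ r in s..b, Q (un r)‖
              + ‖un t - un b - ∫ r in b..t, Q (un r)‖ := by rw [hid]; exact norm_add_le _ _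
        _ ≤ ε * (b - s) + ε * (t - b) := add_le_add hA hB
        _ = ε * (t - s) := by ring
    have hun0 : un 0 = u0 := by
      rw [hun_old 0 hb0]
      exact m.2.2.2.1
    have hnew : ApproxSol S Q u0 M ε (b + h) un := ⟨hun0, hun_memS, hun_lip, hun_int⟩
    have hrel : r m ⟨(b + h, un), ⟨by show (0:ℝ) ≤ b + h; linarith, hbT, hnew⟩⟩ := by
      constructor
      · show b ≤ b + h
        linarith
      · intro t ht0 htb
        exact (hun_old t htb).symm
    have hback := (hm _ hrel).1
    have : b + h ≤ b := hback
    linarith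

end Main

/-- abstract Cauchy problem in a Banach space. Under the
conditions (A) (auxiliary norm/functional bounds), (B) (sub-tangency),
(C) (Hölder continuity) and (D) (one-sided Lipschitz), the initial value
problem `u' = Q[u]`, `u(0) = u₀ ∈ S`, `‖u₀‖_* ≤ R_*` has a unique solution
on `[0,T]` taking values in `S`, continuous on `[0,T]` and continuously
differentiable on `(0,T)`. -/
theorem stmt17 {E : Type*} [NormedAddCommGroup E] [NormedSpace ℝ E] [CompleteSpace E]
    (T : ℝ) (hT : 0 < T) (S : Set E)
    (hSbdd : Bornology.IsBounded S) (hSconv : Convex ℝ S) (hScl : IsClosed S)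
    (Q : E → E)
    -- condition (A)
    (Nstar : E → ℝ) (CE : ℝ) (hCE : 0 < CE)
    (hNadd : ∀ u v : E, Nstar (u + v) ≤ Nstar u + Nstar v)
    (hNsmul : ∀ (a : ℝ) (u : E), Nstar (a • u) = |a| * Nstar u)
    (hNdef : ∀ u : E, Nstar u = 0 → u = 0)
    (hNle : ∀ u : E, Nstar u ≤ CE * ‖u‖)
    (Jstar : E → ℝ)
    (hJadd : ∀ u v : E, Jstar (u + v) ≤ Jstar u + Jstar v)
    (hJsmul : ∀ (a : ℝ), 0 ≤ a → ∀ u : E, Jstar (a • u) = a * Jstar u)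
    (hJS : ∀ u ∈ S, Jstar u = Nstar u)
    (hJle : ∀ u : E, Jstar u ≤ Nstar u)
    (Cstar : ℝ) (hCstar : 0 < Cstar)
    (hQJ : ∀ u ∈ S, Jstar (Q u) ≤ Cstar * (1 + Jstar u))
    (Rstar : ℝ) (hRstar : 1 ≤ Rstar)
    (hSsub : S ⊆ {u : E | Nstar u ≤ (2 * Rstar + 1) * Real.exp ((Cstar + 1) * T)})
    -- condition (B): sub-tangency
    (hsubtangent : ∀ u ∈ S,
      Nstar u ≤ (2 * Rstar + 1) * Real.exp ((Cstar + 1) * T) →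
      Filter.liminf (fun h : ℝ => h⁻¹ * infDist (u + h • Q u) S) (𝓝[>] (0 : ℝ)) = 0)
    -- conditions (C) and (D)
    (C : ℝ) (hC : 0 < C) (β : ℝ) (hβ : β ∈ Set.Ioo (0 : ℝ) 1)
    (hHolder : ∀ u ∈ S, ∀ v ∈ S, ‖Q u - Q v‖ ≤ C * ‖u - v‖ ^ β)
    (hLip : ∀ u ∈ S, ∀ v ∈ S, bracket (Q u - Q v) (u - v) ≤ C * ‖u - v‖) :
    ∀ u0 ∈ S, Nstar u0 ≤ Rstar →
      ∃ u : ℝ → E,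
        (u 0 = u0 ∧ (∀ t ∈ Set.Icc 0 T, u t ∈ S) ∧
          ContinuousOn u (Set.Icc 0 T) ∧
          (∀ t ∈ Set.Ioo 0 T, HasDerivAt u (Q (u t)) t) ∧
          ContinuousOn (fun t => Q (u t)) (Set.Ioo 0 T)) ∧
        ∀ v : ℝ → E,
          (v 0 = u0 ∧ (∀ t ∈ Set.Icc 0 T, v t ∈ S) ∧
            ContinuousOn v (Set.Icc 0 T) ∧
            (∀ t ∈ Set.Ioo 0 T, HasDerivAt v (Q (v t)) t) ∧
            ContinuousOn (fun t => Q (v t)) (Set.Ioo 0 T)) →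
          ∀ t ∈ Set.Icc 0 T, v t = u t := by
  intro u0 hu0S hu0N
  obtain ⟨hβ0, hβ1⟩ := hβ
  -- a uniform bound on `Q` over `S`
  obtain ⟨D, hD⟩ := Metric.isBounded_iff.1 hSbdd
  set M : ℝ := ‖Q u0‖ + C * (max D 0) ^ β with hM_def
  have hM0 : 0 ≤ M :=
    add_nonneg (norm_nonneg _) (mul_nonneg hC.le (Real.rpow_nonneg (le_max_right _ _) _))
  have hM : ∀ u ∈ S, ‖Q u‖ ≤ M := by
    intro u huS
    have h1 : ‖u - u0‖ ≤ max D 0 := by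
      rw [← dist_eq_norm]
      exact (hD huS hu0S).trans (le_max_left _ _)
    calc ‖Q u‖ = ‖Q u - Q u0 + Q u0‖ := by rw [sub_add_cancel]
    _ ≤ ‖Q u - Q u0‖ + ‖Q u0‖ := norm_add_le _ _
    _ ≤ C * ‖u - u0‖ ^ β + ‖Q u0‖ := add_le_add_left (hHolder u huS u0 hu0S) _
    _ ≤ C * (max D 0) ^ β + ‖Q u0‖ := add_le_add_left (mul_le_mul_of_nonneg_left
        (Real.rpow_le_rpow (norm_nonneg _) h1 hβ0.le) hC.le) _
    _ = M := by rw [hM_def]; ring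
  have hSne : S.Nonempty := ⟨u0, hu0S⟩
  -- usable form of the sub-tangency condition
  have hst' : ∀ u ∈ S, ∀ η, 0 < η → ∀ h0, 0 < h0 →
      ∃ h, 0 < h ∧ h < h0 ∧ ∃ w ∈ S, ‖w - u - h • Q u‖ ≤ η * h := by
    intro u huS η hη h0 hh0
    have hB := hsubtangent u huS (hSsub huS)
    have hcob : IsBoundedUnder (· ≤ ·) (𝓝[>] (0:ℝ))
        (fun h : ℝ => h⁻¹ * infDist (u + h • Q u) S) := by
      refine ⟨‖Q u‖, ?_⟩
      rw [eventually_map]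
      filter_upwards [self_mem_nhdsWithin] with h hh
      rw [mem_Ioi] at hh
      have h1 : infDist (u + h • Q u) S ≤ h * ‖Q u‖ := by
        calc infDist (u + h • Q u) S ≤ dist (u + h • Q u) u := infDist_le_dist_of_mem huS
        _ = h * ‖Q u‖ := by
            rw [dist_eq_norm, add_sub_cancel_left, norm_smul, Real.norm_eq_abs,
              abs_of_pos hh]
      calc h⁻¹ * infDist (u + h • Q u) S ≤ h⁻¹ * (h * ‖Q u‖) :=
            mul_le_mul_of_nonneg_left h1 (inv_pos.2 hh).le
      _ = ‖Q u‖ := by field_simp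
    have hfreq : ∃ᶠ h in 𝓝[>] (0:ℝ), h⁻¹ * infDist (u + h • Q u) S < η / 2 := by
      apply frequently_lt_of_liminf_lt hcob.isCoboundedUnder_flip
      rw [hB]
      exact half_pos hη
    have hIoo : Ioo (0:ℝ) h0 ∈ 𝓝[>] (0:ℝ) := Ioo_mem_nhdsGT_of_mem ⟨le_refl 0, hh0⟩
    obtain ⟨h, hlt, hmem⟩ :=
      (hfreq.and_eventually (eventually_of_mem hIoo fun x hx => hx)).exists
    have hpos : 0 < h := hmem.1
    have hinf : infDist (u + h • Q u) S < η * h := by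
      have h2 := mul_lt_mul_of_pos_left hlt hpos
      rw [← mul_assoc, mul_inv_cancel₀ hpos.ne', one_mul] at h2
      nlinarith
    obtain ⟨w, hwS, hwd⟩ := (infDist_lt_iff hSne).1 hinf
    refine ⟨h, hpos, hmem.2, w, hwS, ?_⟩
    have he : ‖w - u - h • Q u‖ = dist (u + h • Q u) w := by
      rw [dist_eq_norm, ← norm_neg]
      congr 1
      abel
    rw [he]
    exact hwd.le
  -- approximate solutions
  have happrox : ∀ n : ℕ, ∃ un : ℝ → E, ApproxSol S Q u0 M (1/((n:ℝ)+1)) T un := by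
    intro n
    apply approx_exists hSconv hScl hC hβ0 hHolder hu0S hM0 hM hst' hT.le
    · positivity
    · rw [div_le_one (by positivity)]
      have : (0:ℝ) ≤ (n:ℝ) := Nat.cast_nonneg n
      linarith
  choose un hun using happrox
  set Kc : ℝ := 2 * Real.exp (C * T) * T with hKc_def
  have hKc0 : 0 ≤ Kc := by positivity
  have hcomp : ∀ n k : ℕ, ∀ t, 0 ≤ t → t ≤ T →
      ‖un n t - un k t‖ ≤ Real.exp (C * T) * ((1/((n:ℝ)+1) + 1/((k:ℝ)+1)) * T) :=
    fun n k => approx_compare hC hβ0 hHolder hLip hM0 (by positivity) (by positivity)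
      hT.le (hun n) (hun k)
  have hconv : ∀ t, 0 ≤ t → t ≤ T → ∃ L, Tendsto (fun n => un n t) atTop (𝓝 L) := by
    intro t ht0 htT
    apply cauchySeq_tendsto_of_complete
    rw [Metric.cauchySeq_iff']
    intro δ hδ
    obtain ⟨N, hN⟩ := exists_nat_one_div_lt (K := ℝ) (ε := δ / (Kc + 1)) (by positivity)
    refine ⟨N, fun n hn => ?_⟩
    rw [dist_eq_norm]
    have h1 : 1/((n:ℝ)+1) ≤ 1/((N:ℝ)+1) := by
      apply one_div_le_one_div_of_le (by positivity)
      have := (Nat.cast_le (α := ℝ)).2 hn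
      linarith
    have hN0 : (0:ℝ) ≤ 1/((N:ℝ)+1) := by positivity
    have h2 : (Kc + 1) * (1/((N:ℝ)+1)) < δ := by
      rw [lt_div_iff₀ (by positivity : (0:ℝ) < Kc + 1)] at hN
      linarith [hN]
    calc ‖un n t - un N t‖
        ≤ Real.exp (C*T) * ((1/((n:ℝ)+1) + 1/((N:ℝ)+1)) * T) := hcomp n N t ht0 htT
    _ ≤ Real.exp (C*T) * ((1/((N:ℝ)+1) + 1/((N:ℝ)+1)) * T) := by
        apply mul_le_mul_of_nonneg_left _ (Real.exp_pos _).le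
        apply mul_le_mul_of_nonneg_right _ hT.le
        linarith
    _ = Kc * (1/((N:ℝ)+1)) := by rw [hKc_def]; ring
    _ ≤ (Kc + 1) * (1/((N:ℝ)+1)) := by nlinarith
    _ < δ := h2
  -- the limit function on `[0, T]`
  set V : ℝ → E := fun x => limUnder atTop (fun n => un n x) with hV_def
  have hV : ∀ x, 0 ≤ x → x ≤ T → Tendsto (fun n => un n x) atTop (𝓝 (V x)) := by
    intro x h1 h2
    obtain ⟨L, hL⟩ := hconv x h1 h2
    have he : V x = L := by rw [hV_def]; exact hL.limUnder_eq
    rwa [he]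
  have hVS : ∀ x, 0 ≤ x → x ≤ T → V x ∈ S := fun x h1 h2 =>
    hScl.mem_of_tendsto (hV x h1 h2) (Eventually.of_forall fun n => (hun n).2.1 x h1 h2)
  have hV0 : V 0 = u0 :=
    tendsto_nhds_unique (hV 0 le_rfl hT.le)
      (Tendsto.congr (fun n => ((hun n).1).symm) tendsto_const_nhds)
  have hVlip : ∀ s t, 0 ≤ s → s ≤ t → t ≤ T → ‖V t - V s‖ ≤ (M+1)*(t-s) := by
    intro s t hs0 hst htT
    apply le_of_tendsto ((hV t (hs0.trans hst) htT).sub (hV s hs0 (hst.trans htT))).norm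
    exact Eventually.of_forall fun n => (hun n).2.2.1 s t hs0 hst htT
  have hVcont : ContinuousOn V (Icc 0 T) := lip_contOn (by linarith) hVlip
  have hVdist : ∀ n : ℕ, ∀ t, 0 ≤ t → t ≤ T → ‖un n t - V t‖ ≤ Kc * (1/((n:ℝ)+1)) := by
    intro n t h1 h2
    apply le_of_tendsto (tendsto_const_nhds.sub (hV t h1 h2)).norm
    filter_upwards [eventually_ge_atTop n] with k hk
    have h3 : 1/((k:ℝ)+1) ≤ 1/((n:ℝ)+1) := by
      apply one_div_le_one_div_of_le (by positivity)
      have := (Nat.cast_le (α := ℝ)).2 hk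
      linarith
    calc ‖un n t - un k t‖
        ≤ Real.exp (C*T) * ((1/((n:ℝ)+1) + 1/((k:ℝ)+1)) * T) := hcomp n k t h1 h2
    _ ≤ Real.exp (C*T) * ((1/((n:ℝ)+1) + 1/((n:ℝ)+1)) * T) := by
        apply mul_le_mul_of_nonneg_left _ (Real.exp_pos _).le
        apply mul_le_mul_of_nonneg_right _ hT.le
        linarith
    _ = Kc * (1/((n:ℝ)+1)) := by rw [hKc_def]; ring
  have hQVcontOn : ContinuousOn (fun r => Q (V r)) (Icc 0 T) :=
    contOn_Q_comp hC hβ0 hHolder hVcont (fun x hx => hVS x hx.1 hx.2)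
  -- `V` satisfies the integral equation
  have hVint : ∀ s t, 0 ≤ s → s ≤ t → t ≤ T → V t = V s + ∫ r in s..t, Q (V r) := by
    intro s t hs0 hst htT
    have hQVint : IntervalIntegrable (fun r => Q (V r)) volume s t :=
      (hQVcontOn.mono (by rw [uIcc_of_le hst]; exact Icc_subset_Icc hs0 htT)).intervalIntegrable
    have key : ∀ δ, 0 < δ → ‖V t - V s - ∫ r in s..t, Q (V r)‖ ≤ δ := by
      intro δ hδ
      obtain ⟨δ1, hδ10, hδ1⟩ := rpow_small hC hβ0
        (show (0:ℝ) < δ/(4*(T+1)) by positivity)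
      have hρpos : (0:ℝ) < min (δ1/(Kc+1)) (min (δ/(4*(Kc+1))) (δ/(4*(T+1)))) :=
        lt_min (by positivity) (lt_min (by positivity) (by positivity))
      obtain ⟨n, hn⟩ := exists_nat_one_div_lt hρpos
      set e : ℝ := 1/((n:ℝ)+1) with he_def
      have he0 : 0 < e := by positivity
      have hrho1 : e < δ1/(Kc+1) := hn.trans_le (min_le_left _ _)
      have hrho2 : e < δ/(4*(Kc+1)) := hn.trans_le ((min_le_right _ _).trans (min_le_left _ _))
      have hrho3 : e < δ/(4*(T+1)) := hn.trans_le ((min_le_right _ _).trans (min_le_right _ _))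
      have hE1 : Kc * e ≤ δ1 := by
        rw [lt_div_iff₀ (by positivity : (0:ℝ) < Kc + 1)] at hrho1
        nlinarith
      have hE2 : Kc * e ≤ δ/4 := by
        rw [lt_div_iff₀ (by positivity : (0:ℝ) < 4*(Kc + 1))] at hrho2
        nlinarith
      have hE3 : e * (t - s) ≤ δ/4 := by
        rw [lt_div_iff₀ (by positivity : (0:ℝ) < 4*(T + 1))] at hrho3
        nlinarith [hst, htT, hs0]
      have hQint_n : IntervalIntegrable (fun r => Q (un n r)) volume s t :=
        (hun n).integrableQ hC hβ0 hHolder hM0 hs0 hst htT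
      have hsplit : V t - V s - ∫ r in s..t, Q (V r)
          = (V t - un n t) + (un n t - un n s - ∫ r in s..t, Q (un n r)) + (un n s - V s)
            + ∫ r in s..t, (Q (un n r) - Q (V r)) := by
        rw [intervalIntegral.integral_sub hQint_n hQVint]
        abel
      have hA : ‖V t - un n t‖ ≤ Kc * e := by
        rw [norm_sub_rev]
        exact hVdist n t (hs0.trans hst) htT
      have hB : ‖un n t - un n s - ∫ r in s..t, Q (un n r)‖ ≤ e * (t - s) :=
        (hun n).2.2.2 s t hs0 hst htT
      have hCc : ‖un n s - V s‖ ≤ Kc * e := hVdist n s hs0 (hst.trans htT)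
      have hDd : ‖∫ r in s..t, (Q (un n r) - Q (V r))‖ ≤ δ/(4*(T+1)) * (t - s) := by
        have hb := intervalIntegral.norm_integral_le_of_norm_le_const
          (C := δ/(4*(T+1))) (f := fun r => Q (un n r) - Q (V r)) (a := s) (b := t) ?_
        · rwa [abs_of_nonneg (by linarith)] at hb
        · intro y hy
          rw [uIoc_of_le hst] at hy
          have hy0 : 0 ≤ y := hs0.trans hy.1.le
          have hyT : y ≤ T := hy.2.trans htT
          calc ‖Q (un n y) - Q (V y)‖ ≤ C * ‖un n y - V y‖ ^ β :=
                hHolder _ ((hun n).2.1 y hy0 hyT) _ (hVS y hy0 hyT)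
          _ ≤ C * (Kc * e) ^ β := mul_le_mul_of_nonneg_left
                (Real.rpow_le_rpow (norm_nonneg _) (hVdist n y hy0 hyT) hβ0.le) hC.le
          _ ≤ δ/(4*(T+1)) := hδ1 _ (by positivity) hE1
      have hDd' : δ/(4*(T+1)) * (t - s) ≤ δ/4 := by
        rw [div_mul_eq_mul_div, div_le_div_iff₀ (by positivity) (by norm_num)]
        nlinarith [hst, htT, hs0, hδ.le]
      calc ‖V t - V s - ∫ r in s..t, Q (V r)‖
          = ‖(V t - un n t) + (un n t - un n s - ∫ r in s..t, Q (un n r)) + (un n s - V s)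
            + ∫ r in s..t, (Q (un n r) - Q (V r))‖ := by rw [hsplit]
      _ ≤ ‖(V t - un n t) + (un n t - un n s - ∫ r in s..t, Q (un n r)) + (un n s - V s)‖
            + ‖∫ r in s..t, (Q (un n r) - Q (V r))‖ := norm_add_le _ _
      _ ≤ (‖(V t - un n t) + (un n t - un n s - ∫ r in s..t, Q (un n r))‖ + ‖un n s - V s‖)
            + ‖∫ r in s..t, (Q (un n r) - Q (V r))‖ := by
            gcongr
            exact norm_add_le _ _
      _ ≤ ((‖V t - un n t‖ + ‖un n t - un n s - ∫ r in s..t, Q (un n r)‖) + ‖un n s - V s‖)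
            + ‖∫ r in s..t, (Q (un n r) - Q (V r))‖ := by
            gcongr
            exact norm_add_le _ _
      _ ≤ δ/4 + δ/4 + δ/4 + δ/4 := by
            have := hB.trans hE3
            have := hA.trans hE2
            have := hCc.trans hE2
            have := hDd.trans hDd'
            linarith
      _ = δ := by ring
    have hz : ‖V t - V s - ∫ r in s..t, Q (V r)‖ = 0 := by
      by_contra hne
      have hpos : 0 < ‖V t - V s - ∫ r in s..t, Q (V r)‖ :=
        lt_of_le_of_ne (norm_nonneg _) (Ne.symm hne)
      have := key (‖V t - V s - ∫ r in s..t, Q (V r)‖/2) (by linarith)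
      linarith
    have hz2 : V t - (V s + ∫ r in s..t, Q (V r)) = 0 := by
      rw [← sub_sub]
      exact norm_eq_zero.1 hz
    exact sub_eq_zero.1 hz2
  -- the globally defined solution
  set proj : ℝ → ℝ := fun t => max 0 (min t T) with hproj_def
  have hproj1 : ∀ t, 0 ≤ proj t := fun t => le_max_left _ _
  have hproj2 : ∀ t, proj t ≤ T := fun t => max_le hT.le (min_le_right _ _)
  have hproj_eq : ∀ t, 0 ≤ t → t ≤ T → proj t = t := by
    intro t h1 h2
    rw [hproj_def]
    simp only [min_eq_left h2, max_eq_right h1]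
  set U : ℝ → E := V ∘ proj with hU_def
  have hUeq : ∀ t, 0 ≤ t → t ≤ T → U t = V t := by
    intro t h1 h2
    rw [hU_def, Function.comp_apply, hproj_eq t h1 h2]
  have hUcont : Continuous U := by
    apply hVcont.comp_continuous
    · exact continuous_const.max (continuous_id.min continuous_const)
    · exact fun t => mem_Icc.2 ⟨hproj1 t, hproj2 t⟩
  have hUS : ∀ t, U t ∈ S := fun t => hVS (proj t) (hproj1 t) (hproj2 t)
  have hU0 : U 0 = u0 := by rw [hUeq 0 le_rfl hT.le, hV0]
  have hQUcont : Continuous fun t => Q (U t) := by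
    rw [continuous_iff_continuousAt]
    intro t
    exact tendsto_Q_comp hC hβ0 hHolder (hUS t) (Eventually.of_forall hUS) (hUcont.tendsto t)
  have hUint : ∀ s t, s ∈ Icc (0:ℝ) T → t ∈ Icc (0:ℝ) T → s ≤ t →
      U t = U s + ∫ r in s..t, Q (U r) := by
    intro s t hs ht hst
    rw [hUeq t (hs.1.trans hst) ht.2, hUeq s hs.1 (hst.trans ht.2), hVint s t hs.1 hst ht.2]
    congr 1
    apply intervalIntegral.integral_congr
    intro y hy
    rw [uIcc_of_le hst] at hy
    show Q (V y) = Q (U y)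
    rw [hUeq y (hs.1.trans hy.1) (hy.2.trans ht.2)]
  have hUderiv : ∀ t ∈ Ioo (0:ℝ) T, HasDerivAt U (Q (U t)) t := by
    intro t0 ht0
    have hG : HasDerivAt (fun τ => U 0 + ∫ r in (0:ℝ)..τ, Q (U r)) (Q (U t0)) t0 := by
      apply HasDerivAt.const_add
      apply intervalIntegral.integral_hasDerivAt_right
      · exact hQUcont.intervalIntegrable 0 t0
      · exact hQUcont.stronglyMeasurableAtFilter volume (𝓝 t0)
      · exact hQUcont.continuousAt
    apply hG.congr_of_eventuallyEq
    filter_upwards [isOpen_Ioo.mem_nhds ht0] with τ hτ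
    exact hUint 0 τ ⟨le_rfl, hT.le⟩ ⟨hτ.1.le, hτ.2.le⟩ hτ.1.le
  refine ⟨U, ⟨hU0, fun t _ => hUS t, hUcont.continuousOn, hUderiv, hQUcont.continuousOn⟩, ?_⟩
  -- uniqueness
  rintro v ⟨hv0, hvS, hvcont, hvderiv, -⟩
  set g : ℝ → ℝ := fun x => ‖v x - U x‖ with hg_def
  have hg0 : g 0 = 0 := by
    rw [hg_def]
    simp [hv0, hU0]
  have hgcontT : ContinuousOn g (Icc 0 T) := (hvcont.sub hUcont.continuousOn).norm
  have hkey : ∀ b, 0 < b → b < T → g b = 0 := by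
    intro b hb0 hbT
    have hgcont : ContinuousOn g (Icc 0 b) :=
      hgcontT.mono (Icc_subset_Icc le_rfl hbT.le)
    have hslope : ∀ τ ∈ Ioc (0:ℝ) b, ∀ r : ℝ, C * g τ + 0 < r →
        ∃ᶠ s in 𝓝[<] τ, (τ - s)⁻¹ * (g τ - g s) < r := by
      intro τ hτ r hr
      have hτT : τ ∈ Ioo (0:ℝ) T := ⟨hτ.1, lt_of_le_of_lt hτ.2 hbT⟩
      have hτIcc : τ ∈ Icc (0:ℝ) T := ⟨hτ.1.le, hτT.2.le⟩
      have hw : HasDerivAt (fun x => v x - U x) (Q (v τ) - Q (U τ)) τ :=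
        (hvderiv τ hτT).sub (hUderiv τ hτT)
      set D' : E := Q (v τ) - Q (U τ) with hD'_def
      set γ : ℝ := (r - C * g τ)/2 with hγ_def
      have hγ : 0 < γ := by rw [hγ_def]; linarith
      have hlil := (hasDerivAt_iff_isLittleO.1 hw).def hγ
      have hev1 : ∀ᶠ s in 𝓝[<] τ,
          ‖(v s - U s) - (v τ - U τ) - (s - τ) • D'‖ ≤ γ * ‖s - τ‖ :=
        hlil.filter_mono nhdsWithin_le_nhds
      have hev2 : ∀ᶠ s in 𝓝[<] τ, s < τ :=
        eventually_mem_nhdsWithin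
      apply Eventually.frequently
      filter_upwards [hev1, hev2] with s h1 h2
      have hk : 0 < τ - s := by linarith
      have hcast : (s - τ) • D' = -((τ - s) • D') := by
        rw [show s - τ = -(τ - s) by ring, neg_smul]
      rw [hcast] at h1
      have h1' : ‖(v s - U s) - ((v τ - U τ) - (τ - s) • D')‖ ≤ γ * (τ - s) := by
        have he : (v s - U s) - (v τ - U τ) - -((τ - s) • D')
            = (v s - U s) - ((v τ - U τ) - (τ - s) • D') := by abel
        rw [he] at h1
        rwa [Real.norm_eq_abs, abs_of_neg (by linarith : s - τ < 0),
          show -(s - τ) = τ - s by ring] at h1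
      have hlow : ‖(v τ - U τ) - (τ - s) • D'‖ - γ * (τ - s) ≤ g s := by
        have h3 := norm_sub_norm_le ((v τ - U τ) - (τ - s) • D') (v s - U s)
        have h4 : ‖((v τ - U τ) - (τ - s) • D') - (v s - U s)‖ ≤ γ * (τ - s) := by
          rw [norm_sub_rev]
          exact h1'
        show _ ≤ ‖v s - U s‖
        linarith
      have hbr : ‖v τ - U τ‖ - ‖(v τ - U τ) - (τ - s) • D'‖ ≤ (τ - s) * (C * g τ) := by
        calc ‖v τ - U τ‖ - ‖(v τ - U τ) - (τ - s) • D'‖ ≤ (τ - s) * bracket D' (v τ - U τ) :=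
              norm_sub_le_bracket D' (v τ - U τ) hk
        _ ≤ (τ - s) * (C * g τ) := mul_le_mul_of_nonneg_left
              (hLip (v τ) (hvS τ hτIcc) (U τ) (hUS τ)) hk.le
      have hgτ : g τ = ‖v τ - U τ‖ := rfl
      have hslope_bound : g τ - g s ≤ (τ - s) * (C * g τ + γ) := by
        have h5 : g τ - g s ≤ (τ - s) * (C * g τ) + γ * (τ - s) := by
          rw [hgτ]
          linarith
        linarith [h5]
      have h6 : (τ - s)⁻¹ * (g τ - g s) ≤ C * g τ + γ := by
        rw [inv_mul_le_iff₀ hk]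
        calc g τ - g s ≤ (τ - s) * (C * g τ + γ) := hslope_bound
        _ = _ := by ring
      calc (τ - s)⁻¹ * (g τ - g s) ≤ C * g τ + γ := h6
      _ < r := by rw [hγ_def]; linarith
    have := gronwall_left hb0.le hC (le_refl (0:ℝ)) hgcont hslope
    rw [hg0] at this
    simp only [zero_mul, add_zero, zero_add, mul_zero] at this
    have hgnn : 0 ≤ g b := norm_nonneg _
    linarith
  have hgzero : ∀ t ∈ Icc (0:ℝ) T, g t = 0 := by
    intro t ht
    rcases lt_or_eq_of_le ht.2 with h | h
    · rcases eq_or_lt_of_le ht.1 with h' | h'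
      · rw [← h']; exact hg0
      · exact hkey t h' h
    · subst h
      haveI hne : (𝓝[Ioo (0:ℝ) t] t).NeBot := by
        apply mem_closure_iff_nhdsWithin_neBot.1
        rw [closure_Ioo (ne_of_lt hT)]
        exact ⟨hT.le, le_rfl⟩
      have htend1 : Tendsto g (𝓝[Ioo (0:ℝ) t] t) (𝓝 (g t)) :=
        (hgcontT t ⟨hT.le, le_rfl⟩).mono_left (nhdsWithin_mono t Ioo_subset_Icc_self)
      have htend2 : Tendsto g (𝓝[Ioo (0:ℝ) t] t) (𝓝 0) := by
        apply Tendsto.congr' _ tendsto_const_nhds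
        filter_upwards [self_mem_nhdsWithin] with s hs
        exact (hkey s hs.1 hs.2).symm
      exact tendsto_nhds_unique htend1 htend2
  intro t ht
  have := hgzero t ht
  rw [hg_def] at this
  exact sub_eq_zero.1 (norm_eq_zero.1 this)
end
end
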